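/- arXiv:2411.17737 — 9 statements merged into one kernel-verified Lean document; each statement's English description precedes it below -/
import Mathlib

section
/- Let n ≥ 2 be an integer and set r = ⌈n/2⌉. Then the n×n integer matrices W_Q(A_n) and (the block-diagonal matrix) W̄_Q(A_n) ⊕ O_{n−r} are equivalent over ℤ; that is, there exist integer matrices U, V of size n×n with determinant ±1 such that U · W_Q(A_n) · V = W̄_Q(A_n) ⊕ O_{n−r}, where O_{n−r} is the (n−r)×(n−r) zero matrix. (Consequently they have the same Smith normal form.) -/
open Matrix BigOperators

/-- The signless Laplacian `Q = A + D` of the Dynkin (path) graph `A_n`,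
with `0`-based indexing: adjacency entries `1` when `|i - j| = 1`, and degree
diagonal `1` at the endpoints and `2` in the interior. -/
def QmatAn (n : ℕ) : Matrix (Fin n) (Fin n) ℤ :=
  Matrix.of fun i j =>
    (if (i : ℕ) + 1 = (j : ℕ) ∨ (j : ℕ) + 1 = (i : ℕ) then 1 else 0) +
    (if i = j then (if (i : ℕ) = 0 ∨ (i : ℕ) = n - 1 then 1 else 2) else 0)

/-- The `Q`-walk matrix of `A_n`: its `j`-th column is `Q^j · e_n` (0-based `j`). -/
def WQAn (n : ℕ) : Matrix (Fin n) (Fin n) ℤ :=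
  Matrix.of fun i j => ((QmatAn n) ^ (j : ℕ)).mulVec (fun _ => 1) i

/-!
`Q` commutes with the reversal `i ↦ n - 1 - i`, so every column `Q ^ j 𝟙` of `W_Q(A_n)`
is reversal-symmetric: row `rev i` equals row `i`, and subtracting row `rev i` from row `i`
for `i ≥ r` clears the lower rows. The symmetric vectors form a free module of rank `r`, with
basis the indicators of the orbits `{k, rev k}`; on it `Q` acts by an `r × r` integer matrix
`M`. By Cayley–Hamilton the monic polynomial `p = charpoly M` of degree `r` kills `Q` on
symmetric vectors, so column `j` of `W_Q(A_n)` is `∑_{k < r} (X ^ j %ₘ p)_k` times column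
`k`, and unitriangular column operations clear the columns `j ≥ r`.
-/

open Polynomial

namespace Matrix

variable {R : Type*} [CommRing R]

section Triangular

variable {ι : Type*} [Fintype ι] [DecidableEq ι] [LinearOrder ι]

theorem det_one_sub_eq_one_of_strictUpper (N : Matrix ι ι R)
    (hN : ∀ i j, j ≤ i → N i j = 0) : (1 - N).det = 1 := by
  rw [det_of_isUpperTriangular fun i j hji => by
    simp [one_apply_ne (show i ≠ j from hji.ne'), hN i j hji.le]]
  simp [hN]

theorem det_one_sub_eq_one_of_strictLower (N : Matrix ι ι R)
    (hN : ∀ i j, i ≤ j → N i j = 0) : (1 - N).det = 1 := by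
  rw [← det_transpose, transpose_sub, transpose_one]
  exact det_one_sub_eq_one_of_strictUpper Nᵀ fun i j hji => hN j i hji

end Triangular

theorem exists_det_eq_one_clear_cols_of_mul_eq {m : Type*} [Fintype m] {n r : ℕ}
    (A : Matrix m (Fin n) R) (c : Matrix (Fin n) (Fin n) R)
    (hc : ∀ k j : Fin n, r ≤ (k : ℕ) → c k j = 0)
    (hA : ∀ i (j : Fin n), r ≤ (j : ℕ) → (A * c) i j = A i j) :
    ∃ V : Matrix (Fin n) (Fin n) R, V.det = 1 ∧
      A * V = of fun i (j : Fin n) => if (j : ℕ) < r then A i j else 0 := by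
  let N : Matrix (Fin n) (Fin n) R := of fun k j => if r ≤ (j : ℕ) then c k j else 0
  refine ⟨1 - N, det_one_sub_eq_one_of_strictUpper N fun k j hjk => ?_, ?_⟩
  · by_cases hj : r ≤ (j : ℕ)
    · simp [N, hj, hc k j (hj.trans (Fin.le_def.1 hjk))]
    · simp [N, hj]
  · ext i j
    rw [Matrix.mul_sub, Matrix.mul_one]
    by_cases hj : r ≤ (j : ℕ)
    · simp [N, mul_apply, hj, ← hA i j hj]
    · simp [N, mul_apply, hj]

theorem exists_det_eq_one_clear_rows_of_rev {ι : Type*} {n r : ℕ} (hr : n ≤ 2 * r)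
    (B : Matrix (Fin n) ι R) (hB : ∀ i : Fin n, B i.rev = B i) :
    ∃ U : Matrix (Fin n) (Fin n) R, U.det = 1 ∧
      U * B = of fun (i : Fin n) j => if (i : ℕ) < r then B i j else 0 := by
  let S : Matrix (Fin n) (Fin n) R := of fun i k => if r ≤ (i : ℕ) ∧ k = i.rev then 1 else 0
  refine ⟨1 - S, det_one_sub_eq_one_of_strictLower S fun i k hik => ?_, ?_⟩
  · have : ¬ (r ≤ (i : ℕ) ∧ k = i.rev) := by
      rintro ⟨hri, rfl⟩
      rw [Fin.le_def, Fin.val_rev] at hik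
      omega
    simp [S, this]
  · ext i j
    rw [Matrix.sub_mul, Matrix.one_mul]
    by_cases hi : r ≤ (i : ℕ)
    · simp [S, mul_apply, hi, hB]
    · simp [S, mul_apply, hi]

section Aeval

variable {m k : Type*} [Fintype m] [Fintype k] [DecidableEq m] [DecidableEq k]

theorem pow_mul_eq_mul_pow {A : Matrix m m R} {P : Matrix m k R} {M : Matrix k k R}
    (h : A * P = P * M) (j : ℕ) : A ^ j * P = P * M ^ j := by
  induction j with
  | zero => simp
  | succ j ih =>
    rw [pow_succ', pow_succ', Matrix.mul_assoc, ih, ← Matrix.mul_assoc, h, Matrix.mul_assoc]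

theorem aeval_mul_eq_mul_aeval {A : Matrix m m R} {P : Matrix m k R} {M : Matrix k k R}
    (h : A * P = P * M) (q : R[X]) : aeval A q * P = P * aeval M q := by
  simp only [aeval_eq_sum_range, Matrix.sum_mul, Matrix.mul_sum, smul_mul, Matrix.mul_smul,
    pow_mul_eq_mul_pow h]

theorem pow_mulVec_eq_sum_modByMonic (A : Matrix m m R) (v : m → R) {p : R[X]} (hp : p.Monic)
    (hv : aeval A p *ᵥ v = 0) {N : ℕ} (hN : p.natDegree ≤ N) (j : ℕ) :
    A ^ j *ᵥ v = ∑ k ∈ Finset.range N, (X ^ j %ₘ p).coeff k • (A ^ k *ᵥ v) := by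
  nontriviality R
  have hdiv : (X ^ j : R[X]) = X ^ j %ₘ p + X ^ j /ₘ p * p := by
    rw [mul_comm, modByMonic_add_div]
  have hmod : A ^ j *ᵥ v = aeval A (X ^ j %ₘ p) *ᵥ v := by
    conv_lhs => rw [← aeval_X_pow (R := R), hdiv]
    rw [map_add, map_mul, add_mulVec, ← mulVec_mulVec, hv, mulVec_zero, add_zero]
  rcases eq_or_ne (X ^ j %ₘ p) 0 with h0 | h0
  · simp [hmod, h0]
  · have hlt : (X ^ j %ₘ p).natDegree < N :=
      (natDegree_lt_natDegree h0 (degree_modByMonic_lt _ hp)).trans_le hN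
    simp [hmod, aeval_eq_sum_range' hlt, sum_mulVec, smul_mulVec]

end Aeval

end Matrix

theorem Polynomial.coeff_modByMonic_eq_zero {R : Type*} [CommRing R] (q : R[X]) {p : R[X]}
    (hp : p.Monic) {k : ℕ} (hk : p.natDegree ≤ k) : (q %ₘ p).coeff k = 0 := by
  nontriviality R
  refine coeff_eq_zero_of_degree_lt ((degree_modByMonic_lt _ hp).trans_le ?_)
  rw [degree_eq_natDegree hp.ne_zero]
  exact_mod_cast hk

theorem Nat.add_one_div_two_le_self (n : ℕ) : (n + 1) / 2 ≤ n := by omega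

def Fin.foldRev {n : ℕ} (i : Fin n) : Fin ((n + 1) / 2) :=
  ⟨min i i.rev, by have := i.isLt; rw [Fin.val_rev]; omega⟩

theorem Fin.foldRev_rev {n : ℕ} (i : Fin n) : i.rev.foldRev = i.foldRev := by
  ext
  simp only [foldRev, rev_rev]
  omega

theorem Fin.castLE_foldRev {n : ℕ} (i : Fin n) :
    i.foldRev.castLE (Nat.add_one_div_two_le_self n) = i ∨
      i.foldRev.castLE (Nat.add_one_div_two_le_self n) = i.rev := by
  simp only [Fin.ext_iff, val_castLE, foldRev, val_rev]
  omega

namespace Matrix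

variable {R : Type*} [CommRing R] {n : ℕ}

variable (R n) in
def foldRevMatrix : Matrix (Fin n) (Fin ((n + 1) / 2)) R :=
  of fun i k => if i.foldRev = k then 1 else 0

theorem foldRevMatrix_mulVec (w : Fin ((n + 1) / 2) → R) (i : Fin n) :
    (foldRevMatrix R n *ᵥ w) i = w i.foldRev := by
  simp [foldRevMatrix, mulVec, dotProduct]

theorem foldRevMatrix_mul_apply {k : Type*} [Fintype k] (M : Matrix (Fin ((n + 1) / 2)) k R)
    (i : Fin n) (l : k) : (foldRevMatrix R n * M) i l = M i.foldRev l := by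
  simp [foldRevMatrix, mul_apply]

theorem eq_foldRevMatrix_mulVec {v : Fin n → R} (hv : ∀ i, v i.rev = v i) :
    v = foldRevMatrix R n *ᵥ (v ∘ Fin.castLE (Nat.add_one_div_two_le_self n)) := by
  funext i
  rw [foldRevMatrix_mulVec]
  rcases i.castLE_foldRev with h | h <;> simp [h, hv]

variable {A : Matrix (Fin n) (Fin n) R}

theorem mulVec_rev (hA : ∀ i j, A i.rev j.rev = A i j) {v : Fin n → R}
    (hv : ∀ i, v i.rev = v i) (i : Fin n) : (A *ᵥ v) i.rev = (A *ᵥ v) i := by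
  simp only [mulVec, dotProduct]
  rw [← Equiv.sum_comp Fin.revPerm]
  simp [hA, hv]

theorem pow_mulVec_rev (hA : ∀ i j, A i.rev j.rev = A i j) {v : Fin n → R}
    (hv : ∀ i, v i.rev = v i) (j : ℕ) (i : Fin n) :
    (A ^ j *ᵥ v) i.rev = (A ^ j *ᵥ v) i := by
  induction j generalizing i with
  | zero => simp [hv]
  | succ j ih => rw [pow_succ', ← mulVec_mulVec]; exact mulVec_rev hA ih i

-- The columns of `foldRevMatrix` span the symmetric vectors, which `A` preserves.
theorem mul_foldRevMatrix (hA : ∀ i j, A i.rev j.rev = A i j) :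
    A * foldRevMatrix R n = foldRevMatrix R n *
      (A * foldRevMatrix R n).submatrix (Fin.castLE (Nat.add_one_div_two_le_self n)) id := by
  ext i l
  have hcol : ∀ i, (A * foldRevMatrix R n) i.rev l = (A * foldRevMatrix R n) i l :=
    mulVec_rev hA (v := fun k => foldRevMatrix R n k l)
      (by simp [foldRevMatrix, Fin.foldRev_rev])
  rw [foldRevMatrix_mul_apply, submatrix_apply, id]
  rcases i.castLE_foldRev with h | h <;> simp [h, hcol]

theorem exists_monic_aeval_mulVec_eq_zero_of_rev [Nontrivial R]
    (hA : ∀ i j, A i.rev j.rev = A i j) :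
    ∃ p : R[X], p.Monic ∧ p.natDegree = (n + 1) / 2 ∧
      ∀ v : Fin n → R, (∀ i, v i.rev = v i) → aeval A p *ᵥ v = 0 := by
  set M := (A * foldRevMatrix R n).submatrix (Fin.castLE (Nat.add_one_div_two_le_self n)) id
  refine ⟨M.charpoly, charpoly_monic M, by simp, fun v hv => ?_⟩
  rw [eq_foldRevMatrix_mulVec hv, mulVec_mulVec, aeval_mul_eq_mul_aeval (mul_foldRevMatrix hA),
    ← mulVec_mulVec, aeval_self_charpoly, zero_mulVec, mulVec_zero]

end Matrix

theorem QmatAn_rev (n : ℕ) (i j : Fin n) : QmatAn n i.rev j.rev = QmatAn n i j := by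
  rcases i with ⟨i, hi⟩
  rcases j with ⟨j, hj⟩
  simp only [QmatAn, of_apply, Fin.rev_inj, Fin.val_rev]
  split_ifs <;> omega

theorem WQAn_rev (n : ℕ) (i : Fin n) : WQAn n i.rev = WQAn n i :=
  funext fun j => pow_mulVec_rev (QmatAn_rev n) (fun _ => rfl) j i

theorem WQAn_mul_coeff_modByMonic (n : ℕ) {p : ℤ[X]} (hp : p.Monic) (hdeg : p.natDegree ≤ n)
    (hpv : aeval (QmatAn n) p *ᵥ (fun _ => 1) = 0) :
    WQAn n * of (fun k j : Fin n => (X ^ (j : ℕ) %ₘ p).coeff k) = WQAn n := by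
  ext i j
  rw [mul_apply]
  simp only [WQAn, of_apply]
  rw [pow_mulVec_eq_sum_modByMonic _ _ hp hpv hdeg, ← Fin.sum_univ_eq_sum_range]
  simp [Finset.sum_apply, mul_comm]

theorem WQAn_equiv_block_general (n : ℕ) (r : ℕ) (hr : r = (n + 1) / 2) :
    ∃ U V : Matrix (Fin n) (Fin n) ℤ,
      (U.det = 1 ∨ U.det = -1) ∧ (V.det = 1 ∨ V.det = -1) ∧
      U * WQAn n * V =
        Matrix.of (fun (i j : Fin n) => if (i : ℕ) < r ∧ (j : ℕ) < r then WQAn n i j else 0) := by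
  subst hr
  obtain ⟨p, hp, hdeg, hpv⟩ := exists_monic_aeval_mulVec_eq_zero_of_rev (QmatAn_rev n)
  obtain ⟨V, hV, hWV⟩ := exists_det_eq_one_clear_cols_of_mul_eq (WQAn n)
    (of fun k j : Fin n => (X ^ (j : ℕ) %ₘ p).coeff k)
    (fun k j hk => coeff_modByMonic_eq_zero _ hp (hdeg.trans_le hk)) fun i j _ => by
      rw [WQAn_mul_coeff_modByMonic n hp (hdeg ▸ Nat.add_one_div_two_le_self n)
        (hpv _ fun _ => rfl)]
  obtain ⟨U, hU, hUWV⟩ := exists_det_eq_one_clear_rows_of_rev (r := (n + 1) / 2) (by omega)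
    (WQAn n * V) fun i => by rw [hWV]; ext j; simp [WQAn_rev]
  refine ⟨U, V, .inl hU, .inl hV, ?_⟩
  rw [Matrix.mul_assoc, hUWV, hWV]
  ext i j
  simp [ite_and]

/-- `W_Q(A_n)` is equivalent over `ℤ` to the block diagonal matrix
`W̄_Q(A_n) ⊕ O_{n-r}`, where `r = ⌈n/2⌉` and `W̄_Q(A_n)` is the leading
principal `r × r` submatrix of `W_Q(A_n)`. -/
theorem WQAn_equiv_block (n : ℕ) (hn : 2 ≤ n) (r : ℕ) (hr : r = (n + 1) / 2) :
    ∃ U V : Matrix (Fin n) (Fin n) ℤ,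
      (U.det = 1 ∨ U.det = -1) ∧ (V.det = 1 ∨ V.det = -1) ∧
      U * WQAn n * V =
        Matrix.of (fun (i j : Fin n) => if (i : ℕ) < r ∧ (j : ℕ) < r then WQAn n i j else 0) :=
  WQAn_equiv_block_general n r hr
end

section
/- Let n = 2r be even with r ≥ 2. Then the leading principal r×r submatrix W̄_Q(A_n) of the Q-walk matrix W_Q(A_n) equals the walk matrix W(M_1) of the matrix M_1; that is, for all 1 ≤ i, j ≤ r the (i,j)-entry of W_Q(A_n) equals the (i,j)-entry of W(M_1). -/
open Matrix BigOperators

/-- The walk matrix of a square matrix `M`: its `j`-th column is `M^j · e` (0-based `j`). -/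
def walkMatrix {r : ℕ} (M : Matrix (Fin r) (Fin r) ℤ) : Matrix (Fin r) (Fin r) ℤ :=
  Matrix.of fun i j => (M ^ (j : ℕ)).mulVec (fun _ => 1) i

/-- The divisor-type matrix `M₁ = B₁ + D̄`: tridiagonal with diagonal
`(1, 2, ..., 2, 3)` and off-diagonal entries `1` (0-based indexing). -/
def M1 (r : ℕ) : Matrix (Fin r) (Fin r) ℤ :=
  Matrix.of fun i j =>
    if i = j then (if (i : ℕ) = 0 then 1 else if (i : ℕ) = r - 1 then 3 else 2)
    else if (i : ℕ) + 1 = (j : ℕ) ∨ (j : ℕ) + 1 = (i : ℕ) then 1 else 0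

lemma sum_ind {n : ℕ} (w : Fin n → ℤ) (m : ℕ) :
    ∑ j : Fin n, (if (j : ℕ) = m then (1:ℤ) else 0) * w j =
      if h : m < n then w ⟨m, h⟩ else 0 := by
  split
  · next h =>
    rw [Finset.sum_eq_single (⟨m, h⟩ : Fin n)]
    · simp
    · intro b _ hb
      have : (b : ℕ) ≠ m := fun he => hb (Fin.ext he)
      simp [this]
    · simp
  · next h =>
    apply Finset.sum_eq_zero
    intro j _
    have : (j : ℕ) ≠ m := by have := j.isLt; omega
    simp [this]

lemma Q_mulVec {n : ℕ} (w : Fin n → ℤ) (i : Fin n) :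
    (QmatAn n *ᵥ w) i =
      (if h : (i : ℕ) + 1 < n then w ⟨(i : ℕ) + 1, h⟩ else 0) +
      (if h : 0 < (i : ℕ) then w ⟨(i : ℕ) - 1, by have := i.isLt; omega⟩ else 0) +
      (if (i : ℕ) = 0 ∨ (i : ℕ) = n - 1 then 1 else 2) * w i := by
  have hsplit : ∀ j : Fin n,
      ((if (i : ℕ) + 1 = (j : ℕ) ∨ (j : ℕ) + 1 = (i : ℕ) then (1:ℤ) else 0) +
       (if i = j then (if (i : ℕ) = 0 ∨ (i : ℕ) = n - 1 then 1 else 2) else 0)) * w j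
    = (if (j : ℕ) = (i : ℕ) + 1 then (1:ℤ) else 0) * w j
      + (if 0 < (i : ℕ) then (if (j : ℕ) = (i : ℕ) - 1 then (1:ℤ) else 0) else 0) * w j
      + (if i = j then (if (i : ℕ) = 0 ∨ (i : ℕ) = n - 1 then (1:ℤ) else 2) else 0) * w j := by
    intro j
    have h1 : (if (i : ℕ) + 1 = (j : ℕ) ∨ (j : ℕ) + 1 = (i : ℕ) then (1:ℤ) else 0)
        = (if (j : ℕ) = (i : ℕ) + 1 then (1:ℤ) else 0)
          + (if 0 < (i : ℕ) then (if (j : ℕ) = (i : ℕ) - 1 then (1:ℤ) else 0) else 0) := by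
      split_ifs <;> omega
    rw [h1]; ring
  unfold QmatAn
  simp only [mulVec, dotProduct, Matrix.of_apply]
  rw [Finset.sum_congr rfl (fun j _ => hsplit j)]
  rw [Finset.sum_add_distrib, Finset.sum_add_distrib, sum_ind]
  congr 1
  · congr 1
    by_cases h0 : 0 < (i : ℕ)
    · simp only [if_pos h0]
      rw [sum_ind, dif_pos (by have := i.isLt; omega), dif_pos h0]
    · simp only [if_neg h0, zero_mul, Finset.sum_const_zero, dif_neg h0]
  · simp only [ite_mul, zero_mul, Finset.sum_ite_eq, Finset.mem_univ, if_pos]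

lemma M1_mulVec {r : ℕ} (v : Fin r → ℤ) (i : Fin r) :
    (M1 r *ᵥ v) i =
      (if h : (i : ℕ) + 1 < r then v ⟨(i : ℕ) + 1, h⟩ else 0) +
      (if h : 0 < (i : ℕ) then v ⟨(i : ℕ) - 1, by have := i.isLt; omega⟩ else 0) +
      (if (i : ℕ) = 0 then 1 else if (i : ℕ) = r - 1 then 3 else 2) * v i := by
  have hsplit : ∀ j : Fin r,
      (if i = j then (if (i : ℕ) = 0 then (1:ℤ) else if (i : ℕ) = r - 1 then 3 else 2)
        else if (i : ℕ) + 1 = (j : ℕ) ∨ (j : ℕ) + 1 = (i : ℕ) then 1 else 0) * v j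
    = (if (j : ℕ) = (i : ℕ) + 1 then (1:ℤ) else 0) * v j
      + (if 0 < (i : ℕ) then (if (j : ℕ) = (i : ℕ) - 1 then (1:ℤ) else 0) else 0) * v j
      + (if i = j then (if (i : ℕ) = 0 then (1:ℤ) else if (i : ℕ) = r - 1 then 3 else 2) else 0) * v j := by
    intro j
    have h1 : (if i = j then (if (i : ℕ) = 0 then (1:ℤ) else if (i : ℕ) = r - 1 then 3 else 2)
        else if (i : ℕ) + 1 = (j : ℕ) ∨ (j : ℕ) + 1 = (i : ℕ) then 1 else 0)
        = (if (j : ℕ) = (i : ℕ) + 1 then (1:ℤ) else 0)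
          + (if 0 < (i : ℕ) then (if (j : ℕ) = (i : ℕ) - 1 then (1:ℤ) else 0) else 0)
          + (if i = j then (if (i : ℕ) = 0 then (1:ℤ) else if (i : ℕ) = r - 1 then 3 else 2) else 0) := by
      simp only [Fin.ext_iff]
      split_ifs <;> omega
    rw [h1]; ring
  unfold M1
  simp only [mulVec, dotProduct, Matrix.of_apply]
  rw [Finset.sum_congr rfl (fun j _ => hsplit j)]
  rw [Finset.sum_add_distrib, Finset.sum_add_distrib, sum_ind]
  congr 1
  · congr 1
    by_cases h0 : 0 < (i : ℕ)
    · simp only [if_pos h0]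
      rw [sum_ind, dif_pos (by have := i.isLt; omega), dif_pos h0]
    · simp only [if_neg h0, zero_mul, Finset.sum_const_zero, dif_neg h0]
  · simp only [ite_mul, zero_mul, Finset.sum_ite_eq, Finset.mem_univ, if_pos]

def extv (r : ℕ) (v : Fin r → ℤ) : Fin (2 * r) → ℤ := fun k =>
  if h : (k : ℕ) < r then v ⟨k, h⟩
  else v ⟨2 * r - 1 - (k : ℕ), by have := k.isLt; omega⟩

lemma extv_eq (r : ℕ) (v : Fin r → ℤ) (k : Fin (2 * r)) (m : ℕ) (hm : m < r)
    (h : (k : ℕ) = m ∨ (k : ℕ) = 2 * r - 1 - m) : extv r v k = v ⟨m, hm⟩ := by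
  have hk := k.isLt
  unfold extv
  split
  · next h' => congr 1; exact Fin.ext (by simp; omega)
  · next h' => congr 1; exact Fin.ext (by simp; omega)

lemma extv_one (r : ℕ) : extv r (fun _ => 1) = fun _ => 1 := by
  funext k; unfold extv; split <;> rfl

lemma veq {r : ℕ} (v : Fin r → ℤ) {a : ℕ} {ha : a < r} (b : ℕ) (hb : b < r)
    (h : a = b) : v ⟨a, ha⟩ = v ⟨b, hb⟩ := by subst h; rfl

lemma Q_ext (r : ℕ) (hr : 2 ≤ r) (v : Fin r → ℤ) :
    QmatAn (2 * r) *ᵥ extv r v = extv r (M1 r *ᵥ v) := by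
  funext i
  have hi := i.isLt
  rw [Q_mulVec]
  by_cases hlow : (i : ℕ) < r
  · -- lower half: mirror index is i itself
    rw [extv_eq r (M1 r *ᵥ v) i (i : ℕ) hlow (Or.inl rfl), M1_mulVec]
    simp only [Fin.val_mk]
    rcases Nat.eq_zero_or_pos (i : ℕ) with h0 | h0
    · -- i = 0
      rw [dif_pos (by omega), dif_neg (by omega), dif_pos (by omega), dif_neg (by omega),
        if_pos (Or.inl h0), if_pos h0,
        extv_eq r v _ 1 (by omega) (Or.inl (by simp only [Fin.val_mk]; omega)),
        extv_eq r v i 0 (by omega) (Or.inl h0),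
        veq (v := v) ((i : ℕ) + 1) (by omega) (show 1 = (i : ℕ) + 1 by omega),
        veq (v := v) (i : ℕ) hlow (show 0 = (i : ℕ) by omega)]
    · by_cases hend : (i : ℕ) = r - 1
      · -- i = r - 1
        rw [dif_pos (by omega), dif_pos h0, dif_neg (by omega), dif_pos h0,
          if_neg (by omega), if_neg (by omega), if_pos hend,
          extv_eq r v _ (r - 1) (by omega) (Or.inr (by simp only [Fin.val_mk]; omega)),
          extv_eq r v _ ((i : ℕ) - 1) (by omega) (Or.inl (by simp only [Fin.val_mk])),
          extv_eq r v i (r - 1) (by omega) (Or.inl hend),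
          veq (v := v) (r - 1) (by omega) (show (i : ℕ) = r - 1 from hend)]
        ring
      · -- 0 < i < r - 1
        rw [dif_pos (by omega), dif_pos h0, dif_pos (by omega), dif_pos h0,
          if_neg (by omega), if_neg (by omega), if_neg hend,
          extv_eq r v _ ((i : ℕ) + 1) (by omega) (Or.inl (by simp only [Fin.val_mk])),
          extv_eq r v _ ((i : ℕ) - 1) (by omega) (Or.inl (by simp only [Fin.val_mk])),
          extv_eq r v i (i : ℕ) hlow (Or.inl rfl)]
  · -- upper half: mirror index is k = 2r - 1 - i
    have hm : 2 * r - 1 - (i : ℕ) < r := by omega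
    rw [extv_eq r (M1 r *ᵥ v) i (2 * r - 1 - (i : ℕ)) hm (Or.inr (by omega)), M1_mulVec]
    simp only [Fin.val_mk]
    by_cases hend : (i : ℕ) = 2 * r - 1
    · -- i = 2r - 1, mirror 0
      rw [dif_neg (by omega), dif_pos (by omega), dif_pos (by omega), dif_neg (by omega),
        if_pos (Or.inr hend), if_pos (by omega),
        extv_eq r v _ 1 (by omega) (Or.inr (by simp only [Fin.val_mk]; omega)),
        extv_eq r v i 0 (by omega) (Or.inr (by omega)),
        veq (v := v) 1 (by omega) (show 2 * r - 1 - (i : ℕ) + 1 = 1 by omega),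
        veq (v := v) 0 (by omega) (show 2 * r - 1 - (i : ℕ) = 0 by omega)]
      ring
    · by_cases hmid : (i : ℕ) = r
      · -- i = r, mirror r - 1
        rw [dif_pos (by omega), dif_pos (by omega), dif_neg (by omega), dif_pos (by omega),
          if_neg (by omega), if_neg (by omega), if_pos (by omega),
          extv_eq r v _ (r - 2) (by omega) (Or.inr (by simp only [Fin.val_mk]; omega)),
          extv_eq r v _ (r - 1) (by omega) (Or.inl (by simp only [Fin.val_mk]; omega)),
          extv_eq r v i (r - 1) (by omega) (Or.inr (by omega)),
          veq (v := v) (r - 2) (by omega)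
            (show 2 * r - 1 - (i : ℕ) - 1 = r - 2 by omega),
          veq (v := v) (r - 1) (by omega)
            (show 2 * r - 1 - (i : ℕ) = r - 1 by omega)]
        ring
      · -- r < i < 2r - 1, mirror k with 1 ≤ k ≤ r - 2
        rw [dif_pos (by omega), dif_pos (by omega), dif_pos (by omega), dif_pos (by omega),
          if_neg (by omega), if_neg (by omega), if_neg (by omega),
          extv_eq r v _ (2 * r - 1 - (i : ℕ) - 1) (by omega)
            (Or.inr (by simp only [Fin.val_mk]; omega)),
          extv_eq r v _ (2 * r - 1 - (i : ℕ) + 1) (by omega)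
            (Or.inr (by simp only [Fin.val_mk]; omega)),
          extv_eq r v i (2 * r - 1 - (i : ℕ)) (by omega) (Or.inr (by omega))]
        ring

lemma pow_ext (r : ℕ) (hr : 2 ≤ r) (j : ℕ) :
    (QmatAn (2 * r)) ^ j *ᵥ (fun _ => 1) = extv r ((M1 r) ^ j *ᵥ fun _ => 1) := by
  induction j with
  | zero => simp [extv_one]
  | succ j ih =>
      rw [pow_succ', ← mulVec_mulVec, ih, Q_ext r hr, pow_succ', ← mulVec_mulVec]

/-- For even `n = 2r`, the leading principal `r × r` submatrix of `W_Q(A_n)`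
equals the walk matrix of `M₁`. -/
theorem WQAn_bar_eq_walk_M1 (r : ℕ) (hr : 2 ≤ r) (n : ℕ) (hn : n = 2 * r)
    (i j : Fin r) :
    WQAn n (Fin.castLE (by omega) i) (Fin.castLE (by omega) j) = walkMatrix (M1 r) i j := by
  subst hn
  show ((QmatAn (2 * r)) ^ ((Fin.castLE (by omega) j : Fin (2 * r)) : ℕ) *ᵥ (fun _ => 1))
      (Fin.castLE (by omega) i) = ((M1 r) ^ (j : ℕ) *ᵥ (fun _ => 1)) i
  rw [Fin.coe_castLE, pow_ext r hr,
    extv_eq r _ _ (i : ℕ) i.isLt (Or.inl (Fin.coe_castLE _ i))]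
end

section
/- Let n = 2r − 1 be odd with r ≥ 2. Then the leading principal r×r submatrix W̄_Q(A_n) of the Q-walk matrix W_Q(A_n) equals the walk matrix W(M_2) of the matrix M_2; that is, for all 1 ≤ i, j ≤ r the (i,j)-entry of W_Q(A_n) equals the (i,j)-entry of W(M_2). -/
open Matrix BigOperators

/-- The divisor-type matrix `M₂ = B₂ + D̄`: tridiagonal with diagonal
`(1, 2, ..., 2)`, superdiagonal entries `1`, subdiagonal entries `1` except the
last one which is `2` (0-based indexing). -/
def M2 (r : ℕ) : Matrix (Fin r) (Fin r) ℤ :=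
  Matrix.of fun i j =>
    if i = j then (if (i : ℕ) = 0 then 1 else 2)
    else if (i : ℕ) + 1 = (j : ℕ) then 1
    else if (j : ℕ) + 1 = (i : ℕ) then (if (i : ℕ) = r - 1 then 2 else 1)
    else 0

/-!
Reversal `i ↦ n - 1 - i` is a symmetry of the path `A_n`, so `Q` preserves palindromic vectors
and every column `Q^k e` of the walk matrix is palindromic. For `n = 2r - 1` a palindromic vector
is determined by its first `r` entries, and on them `Q` acts as `M₂`: only the middle row `r - 1`
changes, because its right neighbour `r` mirrors its left neighbour `r - 2`, which doubles the
subdiagonal entry there. Hence the first `r` entries of `Q^k e` are `M₂^k e`.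
-/

theorem Fin.sum_ite_val_eq {M : Type*} [AddCommMonoid M] {n : ℕ} (k : ℕ) (f : Fin n → M) :
    ∑ j : Fin n, (if (j : ℕ) = k then f j else 0) = if h : k < n then f ⟨k, h⟩ else 0 := by
  split_ifs with h
  · rw [Finset.sum_eq_single ⟨k, h⟩] <;> simp +contextual [Fin.ext_iff]
  · exact Finset.sum_eq_zero fun j _ => if_neg (by omega)

theorem Fin.sum_ite_val_add_one_eq {M : Type*} [AddCommMonoid M] {n : ℕ} (k : ℕ) (hk : k ≤ n)
    (f : Fin n → M) :
    ∑ j : Fin n, (if (j : ℕ) + 1 = k then f j else 0) =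
      if h : 0 < k then f ⟨k - 1, by omega⟩ else 0 := by
  split_ifs with h
  · simp_rw [show ∀ j : ℕ, j + 1 = k ↔ j = k - 1 by omega]
    rw [Fin.sum_ite_val_eq, dif_pos]
  · exact Finset.sum_eq_zero fun j _ => if_neg (by omega)

theorem QmatAn_mulVec_apply {n : ℕ} (v : Fin n → ℤ) (i : Fin n) :
    (QmatAn n *ᵥ v) i =
      (if h : (i : ℕ) + 1 < n then v ⟨i + 1, h⟩ else 0) +
      (if h : 0 < (i : ℕ) then v ⟨i - 1, by omega⟩ else 0) +
      (if (i : ℕ) = 0 ∨ (i : ℕ) = n - 1 then 1 else 2) * v i := by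
  have hrow : ∀ j, QmatAn n i j * v j = (if (j : ℕ) = i + 1 then v j else 0) +
      (if (j : ℕ) + 1 = i then v j else 0) +
      (if i = j then (if (i : ℕ) = 0 ∨ (i : ℕ) = n - 1 then 1 else 2) * v j else 0) := by
    intro j
    simp only [QmatAn, of_apply, Fin.ext_iff]
    split_ifs <;> omega
  simp only [mulVec, dotProduct, hrow, Finset.sum_add_distrib, Fin.sum_ite_val_eq,
    Fin.sum_ite_val_add_one_eq _ i.isLt.le, Finset.sum_ite_eq, Finset.mem_univ, if_true]

theorem M2_mulVec_apply {r : ℕ} (w : Fin r → ℤ) (i : Fin r) :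
    (M2 r *ᵥ w) i =
      (if h : (i : ℕ) + 1 < r then w ⟨i + 1, h⟩ else 0) +
      (if h : 0 < (i : ℕ) then (if (i : ℕ) = r - 1 then 2 else 1) * w ⟨i - 1, by omega⟩ else 0) +
      (if (i : ℕ) = 0 then 1 else 2) * w i := by
  have hrow : ∀ j, M2 r i j * w j = (if (j : ℕ) = i + 1 then w j else 0) +
      (if (j : ℕ) + 1 = i then (if (i : ℕ) = r - 1 then 2 else 1) * w j else 0) +
      (if i = j then (if (i : ℕ) = 0 then 1 else 2) * w j else 0) := by
    intro j
    simp only [M2, of_apply, Fin.ext_iff]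
    split_ifs <;> omega
  simp only [mulVec, dotProduct, hrow, Finset.sum_add_distrib, Fin.sum_ite_val_eq,
    Fin.sum_ite_val_add_one_eq _ i.isLt.le, Finset.sum_ite_eq, Finset.mem_univ, if_true]

theorem QmatAn_submatrix_rev (n : ℕ) : (QmatAn n).submatrix Fin.rev Fin.rev = QmatAn n := by
  ext i j
  simp only [QmatAn, submatrix_apply, of_apply, Fin.val_rev, Fin.ext_iff]
  split_ifs <;> omega

theorem Matrix.mulVec_comp_eq_self {m R : Type*} [Fintype m] [NonUnitalNonAssocSemiring R]
    {A : Matrix m m R} (e : m ≃ m) (hA : A.submatrix e e = A) {v : m → R} (hv : v ∘ e = v) :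
    (A *ᵥ v) ∘ e = A *ᵥ v := by
  have hv_symm : v ∘ e.symm = v := by
    conv_lhs => rw [← hv]
    ext; simp
  calc (A *ᵥ v) ∘ e = (A *ᵥ (v ∘ e.symm)) ∘ e := by rw [hv_symm]
    _ = A.submatrix e e *ᵥ v := (submatrix_mulVec_equiv A v e e).symm
    _ = A *ᵥ v := by rw [hA]

theorem Matrix.pow_mulVec_mem {m R : Type*} [Fintype m] [DecidableEq m] [Semiring R]
    {A : Matrix m m R} {S : Set (m → R)} (hS : ∀ v ∈ S, A *ᵥ v ∈ S) {v : m → R} (hv : v ∈ S)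
    (k : ℕ) : A ^ k *ᵥ v ∈ S := by
  induction k with
  | zero => simpa
  | succ k ih => simpa [pow_succ', ← mulVec_mulVec] using hS _ ih

theorem Matrix.map_pow_mulVec_of_map_mulVec {m n R : Type*} [Fintype m] [DecidableEq m] [Fintype n]
    [DecidableEq n] [Semiring R] {A : Matrix m m R} {B : Matrix n n R} {S : Set (m → R)}
    {f : (m → R) → n → R} (hS : ∀ v ∈ S, A *ᵥ v ∈ S) (hf : ∀ v ∈ S, f (A *ᵥ v) = B *ᵥ f v)
    {v : m → R} (hv : v ∈ S) (k : ℕ) : f (A ^ k *ᵥ v) = B ^ k *ᵥ f v := by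
  induction k with
  | zero => simp
  | succ k ih =>
    rw [pow_succ', ← mulVec_mulVec, hf _ (pow_mulVec_mem hS hv k), ih, pow_succ', mulVec_mulVec]

theorem QmatAn_mulVec_comp_castLE {r : ℕ} {v : Fin (2 * r - 1) → ℤ} (hv : v ∘ Fin.rev = v) :
    (QmatAn (2 * r - 1) *ᵥ v) ∘ Fin.castLE (by omega) = M2 r *ᵥ (v ∘ Fin.castLE (by omega)) := by
  have hmirror : ∀ a b : Fin (2 * r - 1), (a : ℕ) + b + 1 = 2 * r - 1 → v a = v b := fun a b hab => by
    rw [← congrFun hv b]; congr 1; ext; simp only [Fin.val_rev]; omega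
  funext i
  have hi := i.isLt
  rw [Function.comp_apply, QmatAn_mulVec_apply, M2_mulVec_apply]
  simp only [Function.comp_apply, Fin.castLE_mk, Fin.val_castLE]
  split_ifs <;> first
    | omega
    | ring1
    | linear_combination hmirror ⟨i + 1, ‹_›⟩ ⟨i - 1, by omega⟩ (by simp only; omega)

/-- For odd `n = 2r - 1`, the leading principal `r × r` submatrix of `W_Q(A_n)`
equals the walk matrix of `M₂`. -/
theorem WQAn_bar_eq_walk_M2 (r : ℕ) (n : ℕ) (hn : n = 2 * r - 1)
    (i j : Fin r) :
    WQAn n (Fin.castLE (by omega) i) (Fin.castLE (by omega) j) = walkMatrix (M2 r) i j := by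
  subst hn
  have hpal : ∀ v ∈ {v : Fin (2 * r - 1) → ℤ | v ∘ Fin.rev = v},
      QmatAn _ *ᵥ v ∈ {v | v ∘ Fin.rev = v} :=
    fun _ hv => mulVec_comp_eq_self Fin.revPerm (QmatAn_submatrix_rev _) hv
  have hfold := map_pow_mulVec_of_map_mulVec (f := (· ∘ Fin.castLE (by omega))) hpal
    (fun _ hv => QmatAn_mulVec_comp_castLE hv) (v := fun _ => 1) rfl j
  exact congrFun hfold i
end

section
/- Let r ≥ 2 be an integer. For each k = 1,...,r, the vector v_k is an eigenvector of the transpose (M_1)^T corresponding to the eigenvalue λ_k = 2 − 2cos α_k; that is, (M_1)^T · v_k = λ_k · v_k. -/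
open Matrix Real BigOperators

noncomputable section

/-- `α_k = (2k - 1)π / (2r)`. -/
def alphaA (r k : ℕ) : ℝ := (2 * (k : ℝ) - 1) * Real.pi / (2 * (r : ℝ))

/-- The vector `v_k` whose `j`-th entry (1-based `j`) is
`(-1)^(r-j) * (1 + ∑_{i=1}^{r-j} 2 cos(i α_k))`; here 0-based indexing. -/
def vvec (r k : ℕ) : Fin r → ℝ :=
  fun j => (-1 : ℝ) ^ (r - 1 - (j : ℕ)) *
    (1 + ∑ i ∈ Finset.Icc 1 (r - 1 - (j : ℕ)), 2 * Real.cos ((i : ℝ) * alphaA r k))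

/-!
Write `D_m(θ) = 1 + ∑_{i=1}^m 2 cos(iθ)` (the Dirichlet kernel) and `g_m = (-1)^m D_m(α_k)`, so
that the `j`-th entry of `v_k` is `g_{r-1-j}`. Telescoping gives
`(2 - 2 cos θ) D_m = 2 cos(mθ) - 2 cos((m+1)θ)`, hence `D_{m+2} + D_m = 2 cos θ · D_{m+1}`, which
is the equation `g_{m+2} + 2 g_{m+1} + g_m = λ g_{m+1}` of an interior row of `M₁`. The corner
entries `1` and `3` of `M₁` are the interior row `(1, 2, 1)` applied to the vector extended by
`v_{-1} = -v_0` and `v_r = v_{r-1}`. In terms of `g` these read `g_r = -g_{r-1}`, which is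
`cos(r α_k) = 0`, and `g_{-1} = g_0`, under which the bottom row is `g_1 + 3 g_0 = λ g_0`, a
direct check.
-/

def dirichletKernel (θ : ℝ) (m : ℕ) : ℝ := 1 + ∑ i ∈ Finset.Icc 1 m, 2 * cos (i * θ)

theorem dirichletKernel_succ (θ : ℝ) (m : ℕ) :
    dirichletKernel θ (m + 1) = dirichletKernel θ m + 2 * cos ((m + 1) * θ) := by
  rw [dirichletKernel, dirichletKernel, Finset.sum_Icc_succ_top (Nat.le_add_left 1 m)]
  push_cast
  ring

theorem two_sub_two_cos_mul_dirichletKernel (θ : ℝ) (m : ℕ) :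
    (2 - 2 * cos θ) * dirichletKernel θ m = 2 * cos (m * θ) - 2 * cos ((m + 1) * θ) := by
  induction m with
  | zero => simp [dirichletKernel]
  | succ m ih =>
    have hsum : cos ((m + 1 + 1) * θ) + cos (m * θ) = 2 * cos ((m + 1) * θ) * cos θ := by
      rw [add_mul, one_mul, cos_add, show (m : ℝ) * θ = (m + 1) * θ - θ by ring, cos_sub]
      ring
    rw [dirichletKernel_succ]
    push_cast
    linear_combination ih + 2 * hsum

theorem dirichletKernel_add_two (θ : ℝ) (m : ℕ) :
    dirichletKernel θ (m + 2) + dirichletKernel θ m = 2 * cos θ * dirichletKernel θ (m + 1) := by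
  have h1 := dirichletKernel_succ θ (m + 1)
  have h2 := dirichletKernel_succ θ m
  have h3 := two_sub_two_cos_mul_dirichletKernel θ (m + 1)
  push_cast at h1 h3
  linear_combination h1 - h2 + h3

def altDirichletKernel (θ : ℝ) (m : ℕ) : ℝ := (-1) ^ m * dirichletKernel θ m

theorem altDirichletKernel_add_two (θ : ℝ) (m : ℕ) :
    altDirichletKernel θ (m + 2) + 2 * altDirichletKernel θ (m + 1) + altDirichletKernel θ m =
      (2 - 2 * cos θ) * altDirichletKernel θ (m + 1) := by
  simp only [altDirichletKernel, pow_succ]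
  linear_combination (-1) ^ m * dirichletKernel_add_two θ m

theorem altDirichletKernel_one_add_three_mul_zero (θ : ℝ) :
    altDirichletKernel θ 1 + 3 * altDirichletKernel θ 0 =
      (2 - 2 * cos θ) * altDirichletKernel θ 0 := by
  norm_num [altDirichletKernel, dirichletKernel]
  ring

theorem altDirichletKernel_succ_of_cos_eq_zero {θ : ℝ} {m : ℕ} (h : cos ((m + 1) * θ) = 0) :
    altDirichletKernel θ (m + 1) = -altDirichletKernel θ m := by
  rw [altDirichletKernel, altDirichletKernel, dirichletKernel_succ, h, pow_succ]
  ring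

theorem altDirichletKernel_sub_recurrence (θ : ℝ) {N n : ℕ} (hn : n < N) :
    altDirichletKernel θ (N - n) + 2 * altDirichletKernel θ (N - (n + 1)) +
        altDirichletKernel θ (N - (n + 2)) =
      (2 - 2 * cos θ) * altDirichletKernel θ (N - (n + 1)) := by
  obtain ⟨m, rfl⟩ := Nat.exists_eq_add_of_lt hn
  cases m with
  | zero =>
    -- `N - (n + 2)` truncates to `0`: this is the boundary condition `g_{-1} = g_0`
    simp only [show n + 0 + 1 - n = 1 by omega, show n + 0 + 1 - (n + 1) = 0 by omega,
      show n + 0 + 1 - (n + 2) = 0 by omega]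
    linear_combination altDirichletKernel_one_add_three_mul_zero θ
  | succ m =>
    simp only [show n + (m + 1) + 1 - n = m + 2 by omega,
      show n + (m + 1) + 1 - (n + 1) = m + 1 by omega, show n + (m + 1) + 1 - (n + 2) = m by omega]
    exact altDirichletKernel_add_two θ m

theorem cos_natCast_mul_alphaA {r : ℕ} (hr : r ≠ 0) (k : ℕ) : cos (r * alphaA r k) = 0 := by
  refine Real.cos_eq_zero_iff.mpr ⟨(k : ℤ) - 1, ?_⟩
  unfold alphaA
  push_cast
  field_simp
  ring

theorem M1_transpose_mulVec_apply {r : ℕ} (hr : 2 ≤ r) {u : ℕ → ℝ} (h0 : u 0 = -u 1)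
    (htop : u (r + 1) = u r) (j : Fin r) :
    (((M1 r).map (Int.cast : ℤ → ℝ))ᵀ *ᵥ fun i : Fin r => u (i + 1)) j =
      u j + 2 * u (j + 1) + u (j + 2) := by
  -- `j - 1` truncates to `j` at `j = 0`, hence the guard on the subdiagonal term
  let row : ℕ → ℝ := fun n =>
    (if n = j - 1 then (if 0 < (j : ℕ) then 1 else 0) * u (n + 1) else 0) +
    (if n = j then (if (j : ℕ) = 0 then 1 else if (j : ℕ) = r - 1 then 3 else 2) * u (n + 1)
      else 0) +
    (if n = j + 1 then u (n + 1) else 0)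
  have hrow : ∀ i : Fin r, ((M1 r).map (Int.cast : ℤ → ℝ))ᵀ j i * u (i + 1) = row i := by
    intro i
    simp only [row, transpose_apply, map_apply, M1, of_apply, Fin.ext_iff]
    split_ifs <;> first | omega | (push_cast; ring)
  rw [mulVec, dotProduct, Finset.sum_congr rfl fun i _ => hrow i, Fin.sum_univ_eq_sum_range row]
  simp only [row, Finset.sum_add_distrib, Finset.sum_ite_eq', Finset.mem_range]
  have hj := j.isLt
  split_ifs <;> try omega
  · rw [show (j : ℕ) - 1 + 1 = j by omega, show (j : ℕ) + 2 = r + 1 by omega, htop,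
      show (j : ℕ) + 1 = r by omega]
    ring
  · rw [show (j : ℕ) - 1 + 1 = j by omega]
    ring
  · rw [show (j : ℕ) = 0 by omega, h0]
    ring

theorem M1_transpose_mulVec_eq_smul {r : ℕ} (hr : 2 ≤ r) {u : ℕ → ℝ} {μ : ℝ}
    (h0 : u 0 = -u 1) (htop : u (r + 1) = u r)
    (hrec : ∀ n < r, u n + 2 * u (n + 1) + u (n + 2) = μ * u (n + 1)) :
    ((M1 r).map (Int.cast : ℤ → ℝ))ᵀ *ᵥ (fun i : Fin r => u (i + 1)) =
      μ • fun i : Fin r => u (i + 1) := by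
  funext j
  rw [M1_transpose_mulVec_apply hr h0 htop, hrec j j.isLt]
  rfl

theorem M1_transpose_eigenvector_general (r : ℕ) (hr : 2 ≤ r) (k : ℕ) :
    (((M1 r).map (Int.cast : ℤ → ℝ)).transpose).mulVec (vvec r k) =
      (2 - 2 * Real.cos (alphaA r k)) • vvec r k := by
  have hv : vvec r k = fun i : Fin r => altDirichletKernel (alphaA r k) (r - (i + 1)) := by
    funext i
    rw [vvec, altDirichletKernel, dirichletKernel, Nat.sub_sub, add_comm 1]
  rw [hv]
  refine M1_transpose_mulVec_eq_smul hr (u := fun n => altDirichletKernel (alphaA r k) (r - n))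
    ?_ ?_ fun n hn => altDirichletKernel_sub_recurrence _ hn
  · obtain ⟨m, rfl⟩ : ∃ m, r = m + 1 := ⟨r - 1, by omega⟩
    have hcos : cos ((m + 1) * alphaA (m + 1) k) = 0 := by
      exact_mod_cast cos_natCast_mul_alphaA m.succ_ne_zero k
    simpa using altDirichletKernel_succ_of_cos_eq_zero hcos
  · -- `r - (r + 1) = 0 = r - r` in `ℕ`
    simp

/-- `v_k` is an eigenvector of `(M₁)ᵀ` with eigenvalue `λ_k = 2 - 2 cos α_k`. -/
theorem M1_transpose_eigenvector (r : ℕ) (hr : 2 ≤ r) (k : ℕ) (hk1 : 1 ≤ k) (hk2 : k ≤ r) :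
    (((M1 r).map (Int.cast : ℤ → ℝ)).transpose).mulVec (vvec r k) =
      (2 - 2 * Real.cos (alphaA r k)) • vvec r k :=
  M1_transpose_eigenvector_general r hr k
end
end

section
/- Let r ≥ 2 be an integer. Then the product over k = 1,...,r of the sums of the entries of the vectors v_k satisfies ∏_{k=1}^{r} (e_r^T v_k) = (−1)^{⌊r/2⌋} · 2^{r−1}, where e_r^T v_k denotes the sum of the r entries of v_k. -/
open Matrix Real BigOperators

noncomputable section

/-!
Multiplying by `sin α` telescopes the Dirichlet-kernel sums in `v_k`
(`2 sin α cos iα = sin (i+1)α - sin (i-1)α`), and then the alternating sum over the entries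
telescopes as well, leaving `sin α_k · e_rᵀ v_k = -(-1)^r sin (r α_k) = ±1`.
The `α_k` are the angles of the roots `cos α_k` of the Chebyshev polynomial `T_r`, whose leading
coefficient is `2^(r-1)`; evaluating `T_r` at `1` and `-1` gives `∏ (1 - cos α_k)` and
`∏ (1 + cos α_k)`, whence `∏ sin α_k = 2^(1-r)`.
-/

open Finset Polynomial

theorem prod_range_neg_one_pow {R : Type*} [CommMonoid R] [HasDistribNeg R] (n : ℕ) :
    ∏ k ∈ range n, (-1 : R) ^ k = (-1) ^ (n / 2) := by
  induction n using Nat.twoStepInduction with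
  | zero => simp
  | one => simp
  | more n ih _ =>
    rw [prod_range_succ, prod_range_succ, ih, mul_assoc, ← pow_add,
      show n + (n + 1) = 2 * n + 1 by ring, (odd_two_mul_add_one n).neg_one_pow,
      show (n + 2) / 2 = n / 2 + 1 by omega, pow_succ]

namespace Polynomial.Chebyshev

theorem eval_T_real_eq_prod (n : ℕ) (x : ℝ) :
    (T ℝ n).eval x =
      2 ^ (n - 1) * ∏ k ∈ range n, (x - cos ((2 * k + 1) * π / (2 * n))) := by
  have hinj : Set.InjOn (fun k : ℕ ↦ cos ((2 * k + 1) * π / (2 * n))) (range n) :=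
    (range n).nodup_map_iff_injOn.mp (roots_T_real_nodup n)
  have hsplit := C_leadingCoeff_mul_prod_multiset_X_sub_C (p := T ℝ n) (by
    rw [roots_T_real, natDegree_T, ← card_def, card_image_of_injOn hinj, card_range,
      Int.natAbs_natCast])
  rw [← hsplit, roots_T_real, leadingCoeff_T, ← prod_eq_multiset_prod, prod_image hinj, eval_mul,
    eval_C, eval_prod, Int.natAbs_natCast]
  simp

end Polynomial.Chebyshev

theorem prod_sin_odd_mul_pi_div (n : ℕ) :
    2 ^ (n - 1) * ∏ k ∈ range n, sin ((2 * k + 1) * π / (2 * n)) = 1 := by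
  set θ : ℕ → ℝ := fun k ↦ (2 * k + 1) * π / (2 * n)
  have h_one : 2 ^ (n - 1) * ∏ k ∈ range n, (1 - cos (θ k)) = 1 := by
    rw [← Chebyshev.eval_T_real_eq_prod, Chebyshev.T_eval_one]
  have h_neg_one : 2 ^ (n - 1) * ∏ k ∈ range n, (-1 - cos (θ k)) = (-1) ^ n := by
    rw [← Chebyshev.eval_T_real_eq_prod, Chebyshev.T_eval_neg_one, Int.cast_negOnePow_natCast]
  have h_sin_sq (k : ℕ) : sin (θ k) ^ 2 = -((1 - cos (θ k)) * (-1 - cos (θ k))) := by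
    rw [sin_sq]; ring
  have h_sq : (2 ^ (n - 1) * ∏ k ∈ range n, sin (θ k)) ^ 2 = 1 := by
    calc (2 ^ (n - 1) * ∏ k ∈ range n, sin (θ k)) ^ 2
        = (-1) ^ n * ((2 ^ (n - 1) * ∏ k ∈ range n, (1 - cos (θ k))) *
            (2 ^ (n - 1) * ∏ k ∈ range n, (-1 - cos (θ k)))) := by
          simp only [mul_pow, ← prod_pow, h_sin_sq, neg_eq_neg_one_mul (_ * _), prod_mul_distrib,
            prod_const, card_range]
          ring
      _ = 1 := by rw [h_one, h_neg_one, one_mul, ← mul_pow]; norm_num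
  refine (pow_eq_one_iff_of_nonneg ?_ two_ne_zero).mp h_sq
  refine mul_nonneg (by positivity) (prod_nonneg fun k hk ↦ sin_nonneg_of_nonneg_of_le_pi
    (by positivity) ?_)
  have hkn : (2 * k + 1 : ℝ) ≤ 2 * n := by
    have := mem_range.mp hk
    exact_mod_cast (by omega : 2 * k + 1 ≤ 2 * n)
  rw [div_le_iff₀ (by linarith), mul_comm π]
  exact mul_le_mul_of_nonneg_right hkn pi_pos.le

theorem sin_mul_one_add_sum_two_cos (α : ℝ) (m : ℕ) :
    sin α * (1 + ∑ i ∈ Icc 1 m, 2 * cos (i * α)) = sin ((m + 1) * α) + sin (m * α) := by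
  induction m with
  | zero => simp
  | succ m ih =>
    have h_prod_to_sum :
        sin α * (2 * cos ((m + 1) * α)) = sin ((m + 1 + 1) * α) - sin (m * α) := by
      rw [show (m + 1 + 1) * α = (m + 1) * α + α by ring, show m * α = (m + 1) * α - α by ring,
        sin_add, sin_sub]
      ring
    rw [sum_Icc_succ_top (by omega), ← add_assoc, mul_add, ih, Nat.cast_succ, h_prod_to_sum]
    ring

theorem sin_mul_sum_alternating (α : ℝ) (n : ℕ) :
    sin α * ∑ m ∈ range n, (-1) ^ m * (1 + ∑ i ∈ Icc 1 m, 2 * cos (i * α)) =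
      -(-1) ^ n * sin (n * α) := by
  induction n with
  | zero => simp
  | succ n ih =>
    rw [sum_range_succ, mul_add, ih, mul_left_comm, sin_mul_one_add_sum_two_cos, Nat.cast_succ]
    ring

theorem alphaA_succ (r k : ℕ) : alphaA r (k + 1) = (2 * k + 1) * π / (2 * r) := by
  rw [alphaA]; push_cast; ring

theorem sum_vvec_eq_sum_range (r k : ℕ) :
    ∑ j, vvec r k j =
      ∑ m ∈ range r, (-1) ^ m * (1 + ∑ i ∈ Icc 1 m, 2 * cos (i * alphaA r k)) := by
  rw [← sum_range_reflect, ← Fin.sum_univ_eq_sum_range]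
  rfl

theorem sin_alphaA_mul_sum_vvec {r k : ℕ} (hk : k < r) :
    sin (alphaA r (k + 1)) * ∑ j, vvec r (k + 1) j = -(-1) ^ r * (-1) ^ k := by
  have h_angle : r * alphaA r (k + 1) = k * π + π / 2 := by
    have : (r : ℝ) ≠ 0 := Nat.cast_ne_zero.mpr (by omega)
    rw [alphaA_succ]; field_simp
  rw [sum_vvec_eq_sum_range, sin_mul_sum_alternating, h_angle, sin_add_pi_div_two, cos_nat_mul_pi]

theorem prod_sum_vvec_general (r : ℕ) :
    ∏ k ∈ Finset.Icc 1 r, (∑ j, vvec r k j) = (-1 : ℝ) ^ (r / 2) * 2 ^ (r - 1) := by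
  have h_sin := prod_sin_odd_mul_pi_div r
  simp only [← alphaA_succ] at h_sin
  have h_sum (k : ℕ) (hk : k ∈ range r) :
      ∑ j, vvec r (k + 1) j = -(-1) ^ r * (-1) ^ k / sin (alphaA r (k + 1)) := by
    refine eq_div_of_mul_eq ?_ ((mul_comm _ _).trans (sin_alphaA_mul_sum_vvec (mem_range.mp hk)))
    exact prod_ne_zero_iff.mp (right_ne_zero_of_mul_eq_one h_sin) k hk
  have h_sign : (-(-1) ^ r : ℝ) ^ r = 1 := by
    rw [← neg_one_mul, ← pow_succ', ← pow_mul', (Nat.even_mul_succ_self r).neg_one_pow]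
  have h_reindex :
      ∏ k ∈ Icc 1 r, ∑ j, vvec r k j = ∏ k ∈ range r, ∑ j, vvec r (k + 1) j := by
    rw [range_eq_Ico, prod_Ico_add' (fun k ↦ ∑ j, vvec r k j), zero_add,
      Ico_add_one_right_eq_Icc]
  rw [h_reindex, prod_congr rfl h_sum, prod_div_distrib, prod_mul_distrib, prod_const, card_range,
    h_sign, prod_range_neg_one_pow, eq_inv_of_mul_eq_one_right h_sin,
    one_mul, div_inv_eq_mul]

/-- `∏_{k=1}^{r} (e_rᵀ v_k) = (-1)^⌊r/2⌋ · 2^(r-1)`. -/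
theorem prod_sum_vvec (r : ℕ) (hr : 2 ≤ r) :
    ∏ k ∈ Finset.Icc 1 r, (∑ j, vvec r k j) = (-1 : ℝ) ^ (r / 2) * 2 ^ (r - 1) :=
  prod_sum_vvec_general r
end
end

section
/- Let n ≥ 4 be an even integer. Then the rank of the Q-walk matrix W_Q(A_n) (over ℚ) equals ⌈n/2⌉. -/
/-!
The reflection `i ↦ n - 1 - i` is an automorphism of the path, so `Q` commutes with it and every
column `Q^j 1` of `W_Q` is reflection-invariant. For `n = 2m` an invariant vector is determined by
its first `m` coordinates, so the rank is at most `m`. Conversely, writing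
`s_k = e_k + e_{n-1-k}`, we have `Q 1 = 4·1 - 2 s_0`, `Q s_0 = s_0 + s_1` and
`Q s_k = s_{k-1} + 2 s_k + s_{k+1}`, so by induction every `s_k` (`k < m`) lies in the Krylov
space spanned by the columns, and their first `m` coordinates form the standard basis.
-/

open Matrix BigOperators

section

variable {R ι : Type*} [CommSemiring R]

variable (R) in
def fixedVectors (σ : ι → ι) : Submodule R (ι → R) :=
  LinearMap.eqLocus (LinearMap.funLeft R R σ) LinearMap.id

theorem mem_fixedVectors {σ : ι → ι} {x : ι → R} : x ∈ fixedVectors R σ ↔ ∀ i, x (σ i) = x i :=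
  funext_iff

namespace Matrix

theorem mulVec_mem_fixedVectors [Fintype ι] {M : Matrix ι ι R} {σ : Equiv.Perm ι}
    (hM : M.submatrix σ σ = M) {x : ι → R} (hx : x ∈ fixedVectors R σ) :
    M *ᵥ x ∈ fixedVectors R σ := by
  have hx' : x ∘ σ.symm = x := funext fun i => by
    simpa using (mem_fixedVectors.1 hx (σ.symm i)).symm
  rw [mem_fixedVectors]
  intro i
  conv_rhs => rw [← hM, submatrix_mulVec_equiv, hx']
  rfl

variable [Fintype ι] [DecidableEq ι]

def krylov (M : Matrix ι ι R) (v : ι → R) (t : ℕ) : Submodule R (ι → R) :=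
  Submodule.span R ((fun j => M ^ j *ᵥ v) '' Set.Iio t)

variable {M : Matrix ι ι R} {v : ι → R}

theorem pow_mulVec_mem_krylov {j t : ℕ} (h : j < t) : M ^ j *ᵥ v ∈ krylov M v t :=
  Submodule.subset_span ⟨j, h, rfl⟩

theorem krylov_mono : Monotone (krylov M v) := fun _ _ hst =>
  Submodule.span_mono (Set.image_mono (Set.Iio_subset_Iio hst))

theorem mulVec_mem_krylov {t : ℕ} {x : ι → R} (hx : x ∈ krylov M v t) :
    M *ᵥ x ∈ krylov M v (t + 1) := by
  induction hx using Submodule.span_induction with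
  | mem _ hy =>
    obtain ⟨j, hj, rfl⟩ := hy
    rw [mulVec_mulVec, ← pow_succ']
    exact pow_mulVec_mem_krylov (Nat.succ_lt_succ hj)
  | zero => simp
  | add _ _ _ _ hx hy => rw [mulVec_add]; exact add_mem hx hy
  | smul a _ _ hx => rw [mulVec_smul]; exact Submodule.smul_mem _ a hx

theorem krylov_le {S : Submodule R (ι → R)} (hv : v ∈ S) (hS : ∀ x ∈ S, M *ᵥ x ∈ S) (t : ℕ) :
    krylov M v t ≤ S := by
  refine Submodule.span_le.2 ?_
  rintro _ ⟨j, -, rfl⟩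
  induction j with
  | zero => simpa using hv
  | succ j ih =>
    show M ^ (j + 1) *ᵥ v ∈ S
    rw [pow_succ', ← mulVec_mulVec]
    exact hS _ ih

end Matrix

end

open Matrix

def QmatAnRat (n : ℕ) : Matrix (Fin n) (Fin n) ℚ := (QmatAn n).map (Int.cast : ℤ → ℚ)

theorem span_cols_WQAn_map (n : ℕ) :
    Submodule.span ℚ (Set.range ((WQAn n).map (Int.cast : ℤ → ℚ)).col) =
      krylov (QmatAnRat n) 1 n := by
  have hcol : ((WQAn n).map (Int.cast : ℤ → ℚ)).col =
      fun j : Fin n => QmatAnRat n ^ (j : ℕ) *ᵥ 1 := by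
    ext j i
    have := RingHom.map_mulVec (Int.castRingHom ℚ) (QmatAn n ^ (j : ℕ)) (fun _ => 1) i
    rw [Matrix.map_pow] at this
    simp only [Function.comp_def] at this
    exact this
  rw [krylov, hcol, ← Fin.range_val, ← Set.range_comp]
  rfl

theorem QmatAnRat_mulVec_apply (n : ℕ) (hn : 2 ≤ n) (g : ℕ → ℚ) (i : Fin n) :
    (QmatAnRat n *ᵥ (g ∘ Fin.val)) i =
      (if 0 < (i : ℕ) then g i + g (i - 1) else 0) +
      (if (i : ℕ) + 1 < n then g i + g (i + 1) else 0) := by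
  have := i.isLt
  let t : ℕ → ℚ := fun j =>
    (if j = i - 1 then (if 0 < (i : ℕ) then g j else 0) else 0) +
    (if j = i + 1 then (if (i : ℕ) + 1 < n then g j else 0) else 0) +
    (if j = i then ((if 0 < (i : ℕ) then 1 else 0) + (if (i : ℕ) + 1 < n then 1 else 0)) * g j
      else 0)
  have hQ : ∀ j : Fin n, QmatAnRat n i j * g j = t j := by
    intro j
    have := j.isLt
    simp only [t, QmatAnRat, map_apply, QmatAn, of_apply, Fin.ext_iff]
    split_ifs <;> first | omega | (push_cast; ring)
  simp only [mulVec, dotProduct, Function.comp_apply, hQ]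
  rw [Fin.sum_univ_eq_sum_range t]
  simp only [t, Finset.sum_add_distrib, Finset.sum_ite_eq', Finset.mem_range]
  split_ifs <;> first | omega | ring

theorem QmatAnRat_submatrix_rev (n : ℕ) :
    (QmatAnRat n).submatrix Fin.revPerm Fin.revPerm = QmatAnRat n := by
  ext i j
  have := i.isLt; have := j.isLt
  simp only [submatrix_apply, Fin.revPerm_apply, QmatAnRat, map_apply, QmatAn, of_apply,
    Fin.rev_inj, Fin.val_rev]
  split_ifs <;> first | rfl | omega

def mirrorIndicator (n k : ℕ) : Fin n → ℚ :=
  (fun i : ℕ => if i = k ∨ i + k + 1 = n then 1 else 0) ∘ Fin.val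

theorem QmatAnRat_mulVec_one (n : ℕ) (hn : 2 ≤ n) :
    QmatAnRat n *ᵥ 1 = 4 • 1 - 2 • mirrorIndicator n 0 := by
  funext i
  have := i.isLt
  rw [show (1 : Fin n → ℚ) = (fun _ : ℕ => (1 : ℚ)) ∘ Fin.val from rfl, mirrorIndicator,
    QmatAnRat_mulVec_apply n hn _ i]
  simp only [Pi.sub_apply, Pi.smul_apply, Function.comp_apply]
  split_ifs <;> first | omega | norm_num

theorem QmatAnRat_mulVec_mirrorIndicator_zero (n : ℕ) (hn : 4 ≤ n) :
    QmatAnRat n *ᵥ (mirrorIndicator n 0) =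
      mirrorIndicator n 0 + mirrorIndicator n 1 := by
  funext i
  have := i.isLt
  rw [mirrorIndicator, QmatAnRat_mulVec_apply n (by omega) _ i]
  simp only [mirrorIndicator, Pi.add_apply, Function.comp_apply]
  split_ifs <;> grind

theorem QmatAnRat_mulVec_mirrorIndicator_succ (n k : ℕ) (hk : 2 * k + 6 ≤ n) :
    QmatAnRat n *ᵥ mirrorIndicator n (k + 1) =
      mirrorIndicator n k + 2 • mirrorIndicator n (k + 1) + mirrorIndicator n (k + 2) := by
  funext i
  have := i.isLt
  rw [mirrorIndicator, QmatAnRat_mulVec_apply n (by omega) _ i]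
  simp only [mirrorIndicator, Pi.add_apply, Pi.smul_apply, Function.comp_apply]
  split_ifs <;> first | omega | norm_num

theorem mirrorIndicator_mem_krylov (n k : ℕ) (hn : 4 ≤ n) (hk : 2 * k + 2 ≤ n) :
    mirrorIndicator n k ∈ krylov (QmatAnRat n) 1 (k + 2) := by
  let K := krylov (QmatAnRat n) 1
  have h0 : mirrorIndicator n 0 ∈ K 2 := by
    have h : mirrorIndicator n 0 =
        (2 : ℚ)⁻¹ • (4 • QmatAnRat n ^ 0 *ᵥ 1 - QmatAnRat n ^ 1 *ᵥ 1) := by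
      rw [pow_one, QmatAnRat_mulVec_one n (by omega), pow_zero, one_mulVec]
      module
    rw [h]
    exact Submodule.smul_mem _ _ (sub_mem (Submodule.smul_of_tower_mem _ _
      (pow_mulVec_mem_krylov (by omega))) (pow_mulVec_mem_krylov (by omega)))
  have h1 : mirrorIndicator n 1 ∈ K 3 := by
    rw [show mirrorIndicator n 1 = QmatAnRat n *ᵥ mirrorIndicator n 0 - mirrorIndicator n 0 by
      rw [QmatAnRat_mulVec_mirrorIndicator_zero n hn]; abel]
    exact sub_mem (mulVec_mem_krylov h0) (krylov_mono (by omega) h0)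
  have step : ∀ j, 2 * j + 4 ≤ n → mirrorIndicator n j ∈ K (j + 2) ∧
      mirrorIndicator n (j + 1) ∈ K (j + 3) := by
    intro j
    induction j with
    | zero => exact fun _ => ⟨h0, h1⟩
    | succ j ih =>
      intro hj
      obtain ⟨hj0, hj1⟩ := ih (by omega)
      refine ⟨hj1, ?_⟩
      rw [show mirrorIndicator n (j + 2) = QmatAnRat n *ᵥ mirrorIndicator n (j + 1) -
          mirrorIndicator n j - 2 • mirrorIndicator n (j + 1) by
        rw [QmatAnRat_mulVec_mirrorIndicator_succ n j (by omega)]; abel]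
      exact sub_mem (sub_mem (mulVec_mem_krylov hj1) (krylov_mono (by omega) hj0))
        (Submodule.smul_of_tower_mem _ _ (krylov_mono (by omega) hj1))
  rcases k with _ | k
  · exact h0
  · exact (step k (by omega)).2

theorem eq_zero_of_mem_fixedVectors_rev {m : ℕ} {x : Fin (m + m) → ℚ}
    (hx : x ∈ fixedVectors ℚ Fin.revPerm) (h : ∀ i : Fin (m + m), (i : ℕ) < m → x i = 0) :
    x = 0 := by
  funext i
  by_cases hi : (i : ℕ) < m
  · exact h i hi
  · rw [← mem_fixedVectors.1 hx i]
    exact h _ (by rw [Fin.revPerm_apply, Fin.val_rev]; omega)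

theorem mirrorIndicator_comp_castLE (m : ℕ) (k : Fin m) :
    mirrorIndicator (m + m) k ∘ Fin.castLE (Nat.le_add_right m m) = Pi.single k 1 := by
  funext i
  have := i.isLt
  have := k.isLt
  simp only [mirrorIndicator, Function.comp_apply, Fin.val_castLE, Pi.single_apply, Fin.ext_iff]
  split_ifs <;> first | rfl | omega

theorem finrank_krylov_QmatAnRat (m : ℕ) (hm : 2 ≤ m) :
    Module.finrank ℚ (krylov (QmatAnRat (m + m)) 1 (m + m)) = m := by
  set K := krylov (QmatAnRat (m + m)) 1 (m + m)
  have hone : (1 : Fin (m + m) → ℚ) ∈ fixedVectors ℚ Fin.revPerm :=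
    mem_fixedVectors.2 fun _ => rfl
  have hsymm : K ≤ fixedVectors ℚ Fin.revPerm :=
    krylov_le hone (fun _ => mulVec_mem_fixedVectors (QmatAnRat_submatrix_rev _)) _
  let π := (LinearMap.funLeft ℚ ℚ (Fin.castLE (Nat.le_add_right m m))).domRestrict K
  have hinj : Function.Injective π := by
    refine (injective_iff_map_eq_zero π).2 fun x h0 => Subtype.ext ?_
    exact eq_zero_of_mem_fixedVectors_rev (hsymm x.2) fun i hi => congrFun h0 ⟨i, hi⟩
  have hsurj : Function.Surjective π := by
    rw [← LinearMap.range_eq_top, LinearMap.range_domRestrict, eq_top_iff,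
      ← (Pi.basisFun ℚ (Fin m)).span_eq, Submodule.span_le]
    rintro _ ⟨k, rfl⟩
    exact ⟨mirrorIndicator (m + m) k, krylov_mono (by omega)
      (mirrorIndicator_mem_krylov _ k (by omega) (by omega)),
      (mirrorIndicator_comp_castLE m k).trans (Pi.basisFun_apply ℚ (Fin m) k).symm⟩
  rw [(LinearEquiv.ofBijective π ⟨hinj, hsurj⟩).finrank_eq, Module.finrank_fin_fun]

/-- For even `n ≥ 4`, the rank of `W_Q(A_n)` over `ℚ` is `⌈n/2⌉`. -/
theorem rank_WQAn_even (n : ℕ) (hn : 4 ≤ n) (heven : Even n) :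
    ((WQAn n).map (Int.cast : ℤ → ℚ)).rank = (n + 1) / 2 := by
  obtain ⟨m, rfl⟩ := heven
  rw [rank_eq_finrank_span_cols, span_cols_WQAn_map, finrank_krylov_QmatAnRat m (by omega)]
  omega
end

section
/- Let n ≥ 3 be an odd integer. Then the rank of the Q-walk matrix W_Q(A_n) (over ℚ) equals ⌈n/2⌉. -/
open Matrix BigOperators

namespace WQAnAux

def Wcol (n j : ℕ) : Fin n → ℤ := ((QmatAn n) ^ j).mulVec (fun _ => 1)

lemma Wcol_zero (n : ℕ) (i : Fin n) : Wcol n 0 i = 1 := by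
  simp [Wcol]

lemma Wcol_succ (n j : ℕ) : Wcol n (j+1) = (QmatAn n).mulVec (Wcol n j) := by
  simp [Wcol, pow_succ', mulVec_mulVec]

lemma WQAn_apply (n : ℕ) (i j : Fin n) : WQAn n i j = Wcol n (j:ℕ) i := rfl

lemma sum_if1 {R : Type*} [NonAssocSemiring R] {n : ℕ} (t : ℕ) (v : Fin n → R) :
    ∑ j : Fin n, (if t = (j:ℕ) then (1:R) else 0) * v j
      = if h : t < n then v ⟨t, h⟩ else 0 := by
  split
  · next h =>
    rw [Finset.sum_eq_single (⟨t, h⟩ : Fin n)]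
    · simp
    · intro b _ hb
      have : ¬ t = (b:ℕ) := fun e => hb (by exact Fin.ext e.symm)
      simp [this]
    · simp
  · next h =>
    apply Finset.sum_eq_zero
    intro b _
    have : ¬ t = (b:ℕ) := by have := b.isLt; omega
    simp [this]

lemma QmulVec {n : ℕ} (v : Fin n → ℤ) (i : Fin n) :
    (QmatAn n).mulVec v i =
      (if h : 0 < (i:ℕ) then v ⟨(i:ℕ)-1, by omega⟩ else 0)
    + (if (i:ℕ) = 0 ∨ (i:ℕ) = n-1 then 1 else 2) * v i
    + (if h : (i:ℕ)+1 < n then v ⟨(i:ℕ)+1, h⟩ else 0) := by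
  have hi := i.isLt
  unfold QmatAn mulVec dotProduct
  simp only [of_apply]
  have split1 : ∀ j : Fin n,
      ((if (i : ℕ) + 1 = (j : ℕ) ∨ (j : ℕ) + 1 = (i : ℕ) then (1:ℤ) else 0) +
        (if i = j then (if (i : ℕ) = 0 ∨ (i : ℕ) = n - 1 then 1 else 2) else 0)) * v j
      = (if (i:ℕ)+1 = (j:ℕ) then (1:ℤ) else 0) * v j
        + (if (i:ℕ)-1 = (j:ℕ) ∧ 0 < (i:ℕ) then (1:ℤ) else 0) * v j
        + (if i = j then (if (i : ℕ) = 0 ∨ (i : ℕ) = n - 1 then (1:ℤ) else 2) else 0) * v j := by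
    intro j
    have hj := j.isLt
    have hiff : (i = j) ↔ ((i:ℕ) = (j:ℕ)) := Fin.ext_iff
    by_cases e1 : (i:ℕ)+1 = (j:ℕ)
    · have e2 : ¬ ((j:ℕ)+1 = (i:ℕ)) := by omega
      have e3 : ¬ ((i:ℕ)-1 = (j:ℕ) ∧ 0 < (i:ℕ)) := by omega
      have e4 : ¬ i = j := by rw [hiff]; omega
      simp [e1, e2, e3, e4]
    · by_cases e2 : (j:ℕ)+1 = (i:ℕ)
      · have e3 : ((i:ℕ)-1 = (j:ℕ) ∧ 0 < (i:ℕ)) := by omega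
        have e4 : ¬ i = j := by rw [hiff]; omega
        simp [e1, e2, e3, e4]
      · by_cases e4 : i = j
        · simp [e1, e2, e4]
          intro h1 h2
          omega
        · have e3 : ¬ ((i:ℕ)-1 = (j:ℕ) ∧ 0 < (i:ℕ)) := by
            rw [hiff] at e4; omega
          simp [e1, e2, e3, e4]
  rw [Finset.sum_congr rfl (fun j _ => split1 j)]
  rw [Finset.sum_add_distrib, Finset.sum_add_distrib]
  have s1 : ∑ j : Fin n, (if (i:ℕ)+1 = (j:ℕ) then (1:ℤ) else 0) * v j
      = if h : (i:ℕ)+1 < n then v ⟨(i:ℕ)+1, h⟩ else 0 := sum_if1 _ v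
  have s2 : ∑ j : Fin n, (if (i:ℕ)-1 = (j:ℕ) ∧ 0 < (i:ℕ) then (1:ℤ) else 0) * v j
      = if h : 0 < (i:ℕ) then v ⟨(i:ℕ)-1, by omega⟩ else 0 := by
    by_cases hp : 0 < (i:ℕ)
    · have : ∀ j : Fin n, (if (i:ℕ)-1 = (j:ℕ) ∧ 0 < (i:ℕ) then (1:ℤ) else 0) * v j
          = (if (i:ℕ)-1 = (j:ℕ) then (1:ℤ) else 0) * v j := by
        intro j; by_cases e : (i:ℕ)-1 = (j:ℕ) <;> simp [e, hp]
      rw [Finset.sum_congr rfl (fun j _ => this j), sum_if1]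
      have h1 : (i:ℕ)-1 < n := by omega
      simp [hp, h1]
    · simp only [hp, and_false, if_false, zero_mul, Finset.sum_const_zero]
      simp [hp]
  have s3 : ∑ j : Fin n, (if i = j then (if (i : ℕ) = 0 ∨ (i : ℕ) = n - 1 then (1:ℤ) else 2) else 0) * v j
      = (if (i:ℕ) = 0 ∨ (i:ℕ) = n-1 then 1 else 2) * v i := by
    rw [Finset.sum_eq_single i]
    · simp
    · intro b _ hb; simp [Ne.symm hb]
    · simp
  rw [s1, s2, s3]
  ring

variable {n : ℕ}

lemma Wcol_pos : ∀ j (i : Fin n), 0 < Wcol n j i := by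
  intro j
  induction j with
  | zero => intro i; simp [Wcol_zero]
  | succ j ih =>
    intro i
    rw [Wcol_succ, QmulVec]
    have h1 : (0:ℤ) ≤ (if h : 0 < (i:ℕ) then Wcol n j ⟨(i:ℕ)-1, by omega⟩ else 0) := by
      split
      · exact le_of_lt (ih _)
      · exact le_refl _
    have h3 : (0:ℤ) ≤ (if h : (i:ℕ)+1 < n then Wcol n j ⟨(i:ℕ)+1, h⟩ else 0) := by
      split
      · exact le_of_lt (ih _)
      · exact le_refl _
    have h2 : (0:ℤ) < (if (i:ℕ) = 0 ∨ (i:ℕ) = n-1 then 1 else 2) * Wcol n j i := by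
      have := ih i
      split <;> positivity
    linarith

lemma Wcol_le : ∀ j (i : Fin n), Wcol n j i ≤ 4 ^ j := by
  intro j
  induction j with
  | zero => intro i; simp [Wcol_zero]
  | succ j ih =>
    intro i
    rw [Wcol_succ, QmulVec]
    have h1 : (if h : 0 < (i:ℕ) then Wcol n j ⟨(i:ℕ)-1, by omega⟩ else 0) ≤ 4 ^ j := by
      split
      · exact ih _
      · positivity
    have h3 : (if h : (i:ℕ)+1 < n then Wcol n j ⟨(i:ℕ)+1, h⟩ else 0) ≤ 4 ^ j := by
      split
      · exact ih _
      · positivity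
    have h2 : (if (i:ℕ) = 0 ∨ (i:ℕ) = n-1 then 1 else 2) * Wcol n j i ≤ 2 * 4 ^ j := by
      have ha := ih i
      have hb := Wcol_pos j i
      split
      · linarith
      · linarith
    have : (4:ℤ) ^ (j+1) = 4 ^ j + 2 * 4 ^ j + 4 ^ j := by ring
    linarith

lemma Wcol_mid (hn : 3 ≤ n) : ∀ j (i : Fin n), j ≤ (i:ℕ) → (i:ℕ) ≤ n - 1 - j →
    Wcol n j i = 4 ^ j := by
  intro j
  induction j with
  | zero => intro i _ _; simp [Wcol_zero]
  | succ j ih =>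
    intro i hlo hhi
    have hi := i.isLt
    rw [Wcol_succ, QmulVec]
    have e1 : 0 < (i:ℕ) := by omega
    have e2 : (i:ℕ) + 1 < n := by omega
    have e3 : ¬ ((i:ℕ) = 0 ∨ (i:ℕ) = n-1) := by omega
    rw [dif_pos e1, dif_pos e2, if_neg e3]
    rw [ih ⟨(i:ℕ)-1, by omega⟩ (by simp; omega) (by simp; omega)]
    rw [ih ⟨(i:ℕ)+1, e2⟩ (by simp; omega) (by simp; omega)]
    rw [ih i (by omega) (by omega)]
    ring

lemma Wcol_edge (hn : 3 ≤ n) : ∀ j (i : Fin n), (i:ℕ) < j → Wcol n j i < 4 ^ j := by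
  intro j
  induction j with
  | zero => intro i h; omega
  | succ j ih =>
    intro i hij
    rw [Wcol_succ, QmulVec]
    by_cases e1 : 0 < (i:ℕ)
    · have h1 : (if h : 0 < (i:ℕ) then Wcol n j ⟨(i:ℕ)-1, by omega⟩ else 0) < 4 ^ j := by
        rw [dif_pos e1]
        exact ih _ (by simp; omega)
      have h3 : (if h : (i:ℕ)+1 < n then Wcol n j ⟨(i:ℕ)+1, h⟩ else 0) ≤ 4 ^ j := by
        split
        · exact Wcol_le _ _
        · positivity
      have h2 : (if (i:ℕ) = 0 ∨ (i:ℕ) = n-1 then 1 else 2) * Wcol n j i ≤ 2 * 4 ^ j := by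
        have ha := Wcol_le j i
        have hb := Wcol_pos j i
        split <;> linarith
      have : (4:ℤ) ^ (j+1) = 4 ^ j + 2 * 4 ^ j + 4 ^ j := by ring
      linarith
    · have e0 : (i:ℕ) = 0 := by omega
      rw [dif_neg e1, if_pos (Or.inl e0)]
      have h3 : (if h : (i:ℕ)+1 < n then Wcol n j ⟨(i:ℕ)+1, h⟩ else 0) ≤ 4 ^ j := by
        split
        · exact Wcol_le _ _
        · positivity
      have h2 : Wcol n j i ≤ 4 ^ j := Wcol_le j i
      have : (4:ℤ) ^ j + 4 ^ j < 4 ^ (j+1) := by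
        have : (0:ℤ) < 4 ^ j := by positivity
        calc (4:ℤ) ^ j + 4 ^ j < 4 * 4 ^ j := by linarith
        _ = 4 ^ (j+1) := by ring
      linarith

def revF (hn : 3 ≤ n) : Fin n → Fin n := fun i => ⟨n - 1 - (i:ℕ), by omega⟩

lemma revF_invol (hn : 3 ≤ n) : Function.Involutive (revF hn) := by
  intro i
  have := i.isLt
  apply Fin.ext
  simp [revF]
  omega

lemma Q_rev (hn : 3 ≤ n) (i j : Fin n) :
    QmatAn n (revF hn i) (revF hn j) = QmatAn n i j := by
  have hi := i.isLt
  have hj := j.isLt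
  unfold QmatAn revF
  simp only [of_apply]
  congr 1
  · apply if_congr _ rfl rfl
    omega
  · apply if_congr _ _ rfl
    · rw [Fin.ext_iff, Fin.ext_iff]
      simp only []
      omega
    · apply if_congr _ rfl rfl
      omega

lemma Wcol_palin (hn : 3 ≤ n) : ∀ j (i : Fin n),
    Wcol n j (revF hn i) = Wcol n j i := by
  intro j
  induction j with
  | zero => intro i; rw [Wcol_zero, Wcol_zero]
  | succ j ih =>
    intro i
    rw [Wcol_succ]
    unfold Matrix.mulVec dotProduct
    rw [← Equiv.sum_comp (Function.Involutive.toPerm (revF hn) (revF_invol hn))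
      (fun k => QmatAn n (revF hn i) k * Wcol n j k)]
    apply Finset.sum_congr rfl
    intro k _
    have : Function.Involutive.toPerm (revF hn) (revF_invol hn) k = revF hn k := rfl
    rw [this, Q_rev hn, ih k]

end WQAnAux

open WQAnAux in
/-- For odd `n ≥ 3`, the rank of `W_Q(A_n)` over `ℚ` is `⌈n/2⌉`. -/
theorem rank_WQAn_odd (n : ℕ) (hn : 3 ≤ n) (hodd : Odd n) :
    ((WQAn n).map (Int.cast : ℤ → ℚ)).rank = (n + 1) / 2 := by
  obtain ⟨t, ht⟩ := hodd
  set m : ℕ := (n + 1) / 2 with hm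
  have hmn : 2 * m = n + 1 := by omega
  have hmlt : m ≤ n := by omega
  set W' : Matrix (Fin n) (Fin n) ℚ := (WQAn n).map (Int.cast : ℤ → ℚ) with hW'
  have hW'app : ∀ (i j : Fin n), W' i j = ((Wcol n (j:ℕ) i : ℤ) : ℚ) := by
    intro i j
    rw [hW', Matrix.map_apply, WQAn_apply]
  -- Upper bound
  have upper : W'.rank ≤ m := by
    set P : Matrix (Fin n) (Fin m) ℚ :=
      Matrix.of (fun i k => if (min (i:ℕ) (n-1-(i:ℕ))) = (k:ℕ) then 1 else 0) with hP
    set S : Matrix (Fin m) (Fin n) ℚ :=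
      Matrix.of (fun k j => W' ⟨(k:ℕ), by omega⟩ j) with hS
    have hfact : W' = P * S := by
      ext i j
      rw [Matrix.mul_apply]
      have : ∀ k : Fin m, P i k * S k j
          = (if (min (i:ℕ) (n-1-(i:ℕ))) = (k:ℕ) then (1:ℚ) else 0) * S k j := by
        intro k; rw [hP]; rfl
      rw [Finset.sum_congr rfl (fun k _ => this k), sum_if1]
      have hlt : min (i:ℕ) (n-1-(i:ℕ)) < m := by
        have := i.isLt
        omega
      rw [dif_pos hlt, hS]
      simp only [Matrix.of_apply]
      by_cases hc : (i:ℕ) ≤ n-1-(i:ℕ)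
      · have : (⟨(min (i:ℕ) (n-1-(i:ℕ)) : ℕ), by omega⟩ : Fin n) = i := by
          apply Fin.ext; simp; omega
        rw [this]
      · have hrev : (⟨(min (i:ℕ) (n-1-(i:ℕ)) : ℕ), by omega⟩ : Fin n) = revF hn i := by
          apply Fin.ext; simp [revF]; omega
        rw [hrev, hW'app, hW'app, Wcol_palin hn]
    calc W'.rank = (P * S).rank := by rw [hfact]
      _ ≤ S.rank := Matrix.rank_mul_le_right P S
      _ ≤ Fintype.card (Fin m) := Matrix.rank_le_card_height S
      _ = m := Fintype.card_fin m
  -- Lower bound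
  have lower : m ≤ W'.rank := by
    set F : Matrix (Fin m) (Fin n) ℚ :=
      Matrix.of (fun i k => if (i:ℕ) = (k:ℕ) then 1 else 0) with hF
    set G : Matrix (Fin n) (Fin m) ℚ :=
      Matrix.of (fun k j => if (j:ℕ)+1 < m then
          (if (j:ℕ)+1 = (k:ℕ) then 1 else if (j:ℕ) = (k:ℕ) then -4 else 0)
        else (if 0 = (k:ℕ) then 1 else 0)) with hG
    set C : Matrix (Fin m) (Fin m) ℚ := F * (W' * G) with hC
    -- compute entries of C
    have hCapp : ∀ (i j : Fin m), C i j =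
        if h : (j:ℕ)+1 < m then
          ((Wcol n ((j:ℕ)+1) ⟨(i:ℕ), by omega⟩ : ℤ) : ℚ)
            - 4 * ((Wcol n (j:ℕ) ⟨(i:ℕ), by omega⟩ : ℤ) : ℚ)
        else 1 := by
      intro i j
      rw [hC, Matrix.mul_apply]
      have : ∀ k : Fin n, F i k * (W' * G) k j
          = (if (i:ℕ) = (k:ℕ) then (1:ℚ) else 0) * (W' * G) k j := fun k => rfl
      rw [Finset.sum_congr rfl (fun k _ => this k), sum_if1]
      rw [dif_pos (show (i:ℕ) < n by omega)]
      rw [Matrix.mul_apply]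
      by_cases hj : (j:ℕ)+1 < m
      · have hGk : ∀ k : Fin n, W' ⟨(i:ℕ), by omega⟩ k * G k j
            = (if (j:ℕ)+1 = (k:ℕ) then (1:ℚ) else 0) * W' ⟨(i:ℕ), by omega⟩ k
              + (-4) * ((if (j:ℕ) = (k:ℕ) then (1:ℚ) else 0) * W' ⟨(i:ℕ), by omega⟩ k) := by
          intro k
          rw [hG]
          simp only [Matrix.of_apply, if_pos hj]
          by_cases e1 : (j:ℕ)+1 = (k:ℕ)
          · have e2 : ¬ ((j:ℕ) = (k:ℕ)) := by omega
            simp [e1, e2]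
          · by_cases e2 : (j:ℕ) = (k:ℕ)
            · simp [e1, e2]
              ring
            · simp [e1, e2]
        rw [Finset.sum_congr rfl (fun k _ => hGk k), Finset.sum_add_distrib,
          ← Finset.mul_sum, sum_if1, sum_if1]
        rw [dif_pos (show (j:ℕ)+1 < n by omega), dif_pos (show (j:ℕ) < n by omega)]
        rw [dif_pos hj, hW'app, hW'app]
        push_cast
        ring
      · have hGk : ∀ k : Fin n, W' ⟨(i:ℕ), by omega⟩ k * G k j
            = (if 0 = (k:ℕ) then (1:ℚ) else 0) * W' ⟨(i:ℕ), by omega⟩ k := by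
          intro k
          rw [hG]
          simp only [Matrix.of_apply, if_neg hj]
          ring
        rw [Finset.sum_congr rfl (fun k _ => hGk k), sum_if1]
        rw [dif_pos (show 0 < n by omega), dif_neg hj, hW'app]
        rw [Wcol_zero]
        norm_num
    -- C is upper triangular with nonzero diagonal
    have htri : C.BlockTriangular id := by
      intro i j hij
      have hij' : (j:ℕ) < (i:ℕ) := hij
      have hjm : (j:ℕ)+1 < m := by have := i.isLt; omega
      rw [hCapp, dif_pos hjm]
      have hi := i.isLt
      rw [Wcol_mid hn ((j:ℕ)+1) ⟨(i:ℕ), by omega⟩ (by simp; omega) (by simp; omega)]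
      rw [Wcol_mid hn (j:ℕ) ⟨(i:ℕ), by omega⟩ (by simp; omega) (by simp; omega)]
      push_cast
      ring
    have hdiag : ∀ j : Fin m, C j j ≠ 0 := by
      intro j
      rw [hCapp]
      by_cases hj : (j:ℕ)+1 < m
      · rw [dif_pos hj]
        have h1 : Wcol n ((j:ℕ)+1) ⟨(j:ℕ), by omega⟩ < 4 ^ ((j:ℕ)+1) :=
          Wcol_edge hn ((j:ℕ)+1) _ (by simp)
        have h2 : Wcol n (j:ℕ) ⟨(j:ℕ), by omega⟩ = 4 ^ (j:ℕ) :=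
          Wcol_mid hn (j:ℕ) _ (by simp) (by simp; omega)
        rw [h2]
        have : ((Wcol n ((j:ℕ)+1) ⟨(j:ℕ), by omega⟩ : ℤ) : ℚ) < ((4 ^ ((j:ℕ)+1) : ℤ) : ℚ) := by
          exact_mod_cast h1
        have h4 : ((4:ℚ) * ((4 ^ ((j:ℕ)) : ℤ) : ℚ)) = (((4 ^ ((j:ℕ)+1) : ℤ) : ℚ)) := by
          push_cast; ring
        intro hzero
        rw [sub_eq_zero] at hzero
        rw [hzero, h4] at this
        exact lt_irrefl _ this
      · rw [dif_neg hj]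
        norm_num
    have hdet : C.det ≠ 0 := by
      rw [Matrix.det_of_upperTriangular htri]
      exact Finset.prod_ne_zero_iff.mpr (fun j _ => hdiag j)
    have hrankC : C.rank = m := by
      rw [Matrix.rank_of_isUnit C ((Matrix.isUnit_iff_isUnit_det C).mpr
        (isUnit_iff_ne_zero.mpr hdet))]
      exact Fintype.card_fin m
    calc m = C.rank := hrankC.symm
      _ ≤ (W' * G).rank := Matrix.rank_mul_le_right F (W' * G)
      _ ≤ W'.rank := Matrix.rank_mul_le_left W' G
  omega
end

section
/- Let r ≥ 2 be an integer. Then the determinant of the walk matrix W(M_2) of the matrix M_2 equals 2^{r−1}. -/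
open Matrix BigOperators

section Aux
open Finset


/-- coefficient sequence -/
def gg (k i : ℕ) : ℤ :=
  ∑ j ∈ Finset.range (i+1), (if j = 0 then 1 else 2) * ((2*k).choose (k+j) : ℤ)

lemma gg_zero (k : ℕ) : gg k 0 = ((2*k).choose k : ℤ) := by
  simp [gg]

lemma gg_succ (k i : ℕ) : gg k (i+1) = gg k i + 2 * ((2*k).choose (k+i+1) : ℤ) := by
  unfold gg
  rw [Finset.sum_range_succ]
  simp [Nat.add_assoc]

lemma gg_zero_left (i : ℕ) : gg 0 i = 1 := by
  induction i with
  | zero => simp [gg]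
  | succ n ih =>
    rw [gg_succ, ih, Nat.choose_eq_zero_of_lt (by omega)]
    simp

lemma gg_stable (k i : ℕ) (h : k ≤ i) : gg k (i+1) = gg k i := by
  rw [gg_succ, Nat.choose_eq_zero_of_lt (by omega)]
  simp

lemma pascal2 (n m : ℕ) :
    (n+2).choose (m+2) = n.choose m + 2 * n.choose (m+1) + n.choose (m+2) := by
  rw [Nat.choose_succ_succ (n+1) (m+1), Nat.choose_succ_succ n m, Nat.choose_succ_succ n (m+1)]
  ring

lemma ggA (k : ℕ) : gg (k+1) 0 = gg k 0 + gg k 1 := by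
  rw [gg_zero, gg_succ, gg_zero]
  have h1 : (2*(k+1)).choose (k+1) = 2 * ((2*k).choose k) + 2 * ((2*k).choose (k+1)) := by
    have e : 2*(k+1) = (2*k+1)+1 := by ring
    rw [e, Nat.choose_succ_succ (2*k+1) k, ← Nat.choose_symm_half,
      Nat.choose_succ_succ (2*k) k]
    ring
  push_cast [h1]; ring

lemma ggB (k : ℕ) : ∀ i, gg (k+1) (i+1) = gg k i + 2 * gg k (i+1) + gg k (i+2) := by
  intro i
  induction i with
  | zero =>
    rw [gg_succ (k+1) 0, ggA, gg_succ k 1, gg_succ k 0, gg_zero]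
    simp only [show 2*(k+1) = 2*k+2 from by ring, show k+1+0+1 = k+2 from by ring,
      show k+1+1 = k+2 from by ring, show k+0+1 = k+1 from by ring,
      pascal2 (2*k) k]
    push_cast; ring
  | succ n ih =>
    have e1 : n+1+1 = n+2 := by ring
    have e2 : n+1+2 = (n+2)+1 := by ring
    rw [e1, e2, gg_succ (k+1) (n+1), ih, gg_succ k (n+2), e1, gg_succ k (n+1), gg_succ k n]
    simp only [show 2*(k+1) = 2*k+2 from by ring,
      show k+1+(n+1)+1 = (k+n+1)+2 from by ring,
      show k+(n+2)+1 = (k+n+1)+2 from by ring,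
      show k+(n+1)+1 = (k+n+1)+1 from by ring,
      pascal2 (2*k) (k+n+1)]
    push_cast; ring

lemma M2_mulVec (r : ℕ) (v : Fin r → ℤ) (i : Fin r) :
    (M2 r *ᵥ v) i =
      (if h : 0 < (i:ℕ) then
        (if (i:ℕ) = r-1 then 2 else 1) * v ⟨(i:ℕ)-1, by omega⟩ else 0)
      + (if (i:ℕ) = 0 then 1 else 2) * v i
      + (if h : (i:ℕ)+1 < r then v ⟨(i:ℕ)+1, h⟩ else 0) := by
  have key : ∀ j : Fin r, M2 r i j * v j =
      (if h : 0 < (i:ℕ) then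
        (if j = ⟨(i:ℕ)-1, by omega⟩ then (if (i:ℕ) = r-1 then 2 else 1) * v j else 0) else 0)
      + (if j = i then (if (i:ℕ) = 0 then 1 else 2) * v j else 0)
      + (if h : (i:ℕ)+1 < r then (if j = ⟨(i:ℕ)+1, h⟩ then v j else 0) else 0) := by
    intro j
    simp only [M2, Matrix.of_apply, Fin.ext_iff]
    split_ifs <;> (try omega) <;> ring
  rw [Matrix.mulVec, dotProduct, Finset.sum_congr rfl (fun j _ => key j)]
  rw [Finset.sum_add_distrib, Finset.sum_add_distrib]
  congr 1
  · congr 1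
    · by_cases h : 0 < (i:ℕ)
      · simp only [dif_pos h]
        rw [Finset.sum_ite_eq' Finset.univ (⟨(i:ℕ)-1, by omega⟩ : Fin r)]
        simp
      · simp [dif_neg h]
    · rw [Finset.sum_ite_eq' Finset.univ i]
      simp
  · by_cases h : (i:ℕ)+1 < r
    · simp only [dif_pos h]
      rw [Finset.sum_ite_eq' Finset.univ (⟨(i:ℕ)+1, h⟩ : Fin r)]
      simp
    · simp [dif_neg h]

lemma key (r : ℕ) (hr : 2 ≤ r) :
    ∀ k, k ≤ r - 1 → ∀ i : Fin r, ((M2 r) ^ k *ᵥ fun _ => (1:ℤ)) i = gg k (i:ℕ) := by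
  intro k
  induction k with
  | zero => intro _ i; simp [Matrix.one_mulVec, gg_zero_left]
  | succ k ih =>
    intro hk i
    have ihv : ((M2 r) ^ k *ᵥ fun _ => (1:ℤ)) = fun j : Fin r => gg k (j:ℕ) :=
      funext (ih (by omega))
    rw [pow_succ', ← Matrix.mulVec_mulVec, ihv, M2_mulVec]
    rcases Nat.eq_zero_or_pos (i:ℕ) with h0 | h0
    · -- i = 0
      have h1 : (i:ℕ) + 1 < r := by omega
      rw [dif_neg (by omega), dif_pos h1]
      simp only [h0, if_pos rfl]
      rw [ggA]
      push_cast [h0]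
      ring
    · obtain ⟨m, hm⟩ : ∃ m, (i:ℕ) = m + 1 := ⟨(i:ℕ)-1, by omega⟩
      rw [dif_pos h0]
      by_cases h1 : (i:ℕ)+1 < r
      · -- interior
        rw [if_neg (show ¬(i:ℕ) = r-1 by omega), if_neg (show ¬(i:ℕ) = 0 by omega),
          dif_pos h1]
        simp only [hm, Nat.add_sub_cancel]
        rw [ggB]
        ring
      · -- bottom row : i = r-1
        have hir : (i:ℕ) = r - 1 := by omega
        rw [if_pos hir, if_neg (show ¬(i:ℕ) = 0 by omega), dif_neg h1]
        simp only [hm, Nat.add_sub_cancel]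
        rw [ggB]
        have s1 : gg k (m+2) = gg k (m+1) := gg_stable k (m+1) (by omega)
        have s2 : gg k (m+1) = gg k m := gg_stable k m (by omega)
        rw [s1, s2]
        ring

-- the factor matrices
def TT (r : ℕ) : Matrix (Fin r) (Fin r) ℤ :=
  Matrix.of fun i j => if (j:ℕ) ≤ (i:ℕ) then 1 else 0

def AA (r : ℕ) : Matrix (Fin r) (Fin r) ℤ :=
  Matrix.of fun i k => (if (i:ℕ) = 0 then 1 else 2) * ((2*(k:ℕ)).choose ((k:ℕ)+(i:ℕ)) : ℤ)

lemma walk_eq (r : ℕ) (hr : 2 ≤ r) : walkMatrix (M2 r) = TT r * AA r := by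
  ext i k
  have hk : (k:ℕ) ≤ r - 1 := by omega
  have := key r hr (k:ℕ) hk i
  simp only [walkMatrix, Matrix.of_apply]
  rw [this]
  rw [Matrix.mul_apply]
  unfold TT AA gg
  simp only [Matrix.of_apply]
  rw [Fin.sum_univ_eq_sum_range
    (fun j => (if j ≤ (i:ℕ) then (1:ℤ) else 0) * ((if j = 0 then 1 else 2) * ((2*(k:ℕ)).choose ((k:ℕ)+j) : ℤ)))]
  set F : ℕ → ℤ := fun j => (if j = 0 then 1 else 2) * ((2*(k:ℕ)).choose ((k:ℕ)+j) : ℤ) with hF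
  calc ∑ j ∈ Finset.range ((i:ℕ)+1), F j
      = ∑ j ∈ Finset.range ((i:ℕ)+1), (if j ≤ (i:ℕ) then F j else 0) := by
        refine Finset.sum_congr rfl fun j hj => ?_
        rw [if_pos (by simpa [Nat.lt_succ_iff] using Finset.mem_range.mp hj)]
    _ = ∑ j ∈ Finset.range r, (if j ≤ (i:ℕ) then F j else 0) := by
        refine Finset.sum_subset (Finset.range_subset_range.mpr (by omega)) fun x _ hx => ?_
        rw [if_neg (by simp only [Finset.mem_range] at hx; omega)]
    _ = ∑ j ∈ Finset.range r, (if j ≤ (i:ℕ) then (1:ℤ) else 0) * F j := by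
        refine Finset.sum_congr rfl fun j _ => ?_
        split_ifs <;> ring

lemma prod_if_pow (m : ℕ) :
    ∏ j ∈ Finset.range m, (if j = 0 then (1:ℤ) else 2) = 2 ^ (m-1) := by
  induction m with
  | zero => simp
  | succ n ih =>
    rw [Finset.prod_range_succ, ih]
    rcases Nat.eq_zero_or_pos n with h | h
    · simp [h]
    · rw [if_neg (by omega)]
      rw [show n + 1 - 1 = (n-1)+1 from by omega, pow_succ]

lemma det_TT (r : ℕ) : (TT r).det = 1 := by
  rw [Matrix.det_of_lowerTriangular (TT r)
    (fun i j h => by simp only [TT, Matrix.of_apply]; rw [if_neg (by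
      simp only [OrderDual.toDual_lt_toDual] at h
      omega)])]
  simp [TT]

lemma det_AA (r : ℕ) : (AA r).det = 2 ^ (r-1) := by
  rw [Matrix.det_of_upperTriangular (show (AA r).BlockTriangular id from
    fun i j h => by
      simp only [AA, Matrix.of_apply]
      rw [Nat.choose_eq_zero_of_lt (by
        simp only [id_eq] at h
        have : (j:ℕ) < (i:ℕ) := h
        omega)]
      simp)]
  have : ∀ i : Fin r, AA r i i = (if (i:ℕ) = 0 then (1:ℤ) else 2) := by
    intro i
    simp only [AA, Matrix.of_apply]
    rw [show 2*(i:ℕ) = (i:ℕ)+(i:ℕ) from by ring, Nat.choose_self]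
    simp
  rw [Finset.prod_congr rfl (fun i _ => this i)]
  rw [Fin.prod_univ_eq_prod_range (fun j => if j = 0 then (1:ℤ) else 2)]
  exact prod_if_pow r

end Aux

/-- `det W(M₂) = 2^(r-1)`. -/
theorem det_walkMatrix_M2 (r : ℕ) (hr : 2 ≤ r) :
    (walkMatrix (M2 r)).det = 2 ^ (r - 1) := by
  rw [walk_eq r hr, Matrix.det_mul, det_TT, det_AA, one_mul]
end

section
/- For every integer m ≥ 1, ∏_{k=1}^{m} cos(kπ/(2m+1)) = 1/2^{m}. -/
open Real BigOperators

/-! With `x k = kπ/(2m+1)`, the numbers `sin (2 x k)` for `k = 1, …, m` are the numbers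
`sin (x k)` in another order, because `sin (π - x) = sin x`. Expanding `sin (2 x k)` by the
double-angle formula and cancelling the nonzero product of the `sin (x k)` leaves
`2 ^ m ∏ cos (x k) = 1`. -/

open Finset in
/-- `k ↦ ±2k mod (2m + 1)` permutes `1, …, m`. -/
theorem Finset.prod_Icc_two_mul_of_symmetric {M : Type*} [CommMonoid M] (m : ℕ) (g : ℕ → M)
    (hg : ∀ j ≤ 2 * m + 1, g (2 * m + 1 - j) = g j) :
    ∏ k ∈ Icc 1 m, g (2 * k) = ∏ k ∈ Icc 1 m, g k := by
  refine prod_nbij' (fun k ↦ if 2 * k ≤ m then 2 * k else 2 * m + 1 - 2 * k)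
    (fun j ↦ if j % 2 = 0 then j / 2 else (2 * m + 1 - j) / 2) ?_ ?_ ?_ ?_ ?_
  iterate 4 intro a ha; simp only [mem_Icc] at *; split_ifs <;> omega
  intro k hk
  split_ifs
  · rfl
  · exact (hg (2 * k) (by simp only [mem_Icc] at hk; omega)).symm

theorem Real.prod_sin_two_mul {ι : Type*} (s : Finset ι) (x : ι → ℝ) :
    ∏ i ∈ s, sin (2 * x i) = 2 ^ s.card * (∏ i ∈ s, sin (x i)) * ∏ i ∈ s, cos (x i) := by
  simp only [sin_two_mul, Finset.prod_mul_distrib, Finset.prod_const]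

theorem Real.prod_sin_nat_mul_pi_div_ne_zero (n m : ℕ) (hmn : m < n) :
    ∏ k ∈ Finset.Icc 1 m, sin ((k : ℝ) * π / n) ≠ 0 := by
  refine Finset.prod_ne_zero_iff.mpr fun k hk ↦ ?_
  obtain ⟨hk1, hkm⟩ := Finset.mem_Icc.mp hk
  have hk_pos : (0 : ℝ) < k := by exact_mod_cast hk1
  have hkn : (k : ℝ) < n := by exact_mod_cast hkm.trans_lt hmn
  have hn_pos : (0 : ℝ) < n := hk_pos.trans hkn
  refine (sin_pos_of_pos_of_lt_pi (div_pos (mul_pos hk_pos pi_pos) hn_pos) ?_).ne'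
  rw [div_lt_iff₀ hn_pos]
  nlinarith [pi_pos]

theorem prod_cos_multiples_general (m : ℕ) :
    ∏ k ∈ Finset.Icc 1 m, Real.cos ((k : ℝ) * Real.pi / (2 * (m : ℝ) + 1)) =
      1 / 2 ^ m := by
  set x : ℕ → ℝ := fun k ↦ (k : ℝ) * π / (2 * (m : ℝ) + 1)
  have hsymm : ∀ j ≤ 2 * m + 1, sin (x (2 * m + 1 - j)) = sin (x j) := by
    intro j hj
    have : x (2 * m + 1 - j) = π - x j := by
      simp only [x]; rw [Nat.cast_sub hj]; push_cast; field_simp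
    rw [this, sin_pi_sub]
  have hdouble : ∀ k, x (2 * k) = 2 * x k := by
    intro k; simp only [x]; push_cast; ring
  have hS : ∏ k ∈ Finset.Icc 1 m, sin (x k) ≠ 0 := by
    simpa [x] using prod_sin_nat_mul_pi_div_ne_zero (2 * m + 1) m (by omega)
  have hprod := Finset.prod_Icc_two_mul_of_symmetric m (fun j ↦ sin (x j)) hsymm
  simp only [hdouble, prod_sin_two_mul, Nat.card_Icc, add_tsub_cancel_right] at hprod
  rw [eq_div_iff (by positivity)]
  apply mul_left_cancel₀ hS
  linear_combination hprod

/-- `∏_{k=1}^{m} cos(kπ/(2m+1)) = 1/2^m` for every `m ≥ 1`. -/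
theorem prod_cos_multiples (m : ℕ) (hm : 1 ≤ m) :
    ∏ k ∈ Finset.Icc 1 m, Real.cos ((k : ℝ) * Real.pi / (2 * (m : ℝ) + 1)) =
      1 / 2 ^ m :=
  prod_cos_multiples_general m
end
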